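/- arXiv:1403.7338 — 5 statements merged into one kernel-verified Lean document; each statement's English description precedes it below -/
import Mathlib

section
/- Let T be a measure-preserving transformation of a probability space (Ω, 𝒜, μ̄) and h : Ω → [0,∞) a measurable function such that the positive part (h − h∘T)⁺ is μ̄-integrable. Then (1/n)·h(Tⁿω) → 0 for μ̄-almost every ω ∈ Ω. -/
/-!
Put `f = h ∘ T - h`, so that `h (Tⁿ ω) = h ω + ∑_{k<n} f (Tᵏ ω)`. Truncating `h` at level `M`
shows `∫ (h ∘ T - h)⁺ ≤ ∫ (h - h ∘ T)⁺`, so `f` is integrable, and Birkhoff's ergodic theorem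
makes `h (Tⁿ ω) / n` converge almost everywhere. By Poincaré recurrence almost every orbit
returns infinitely often to some sublevel set `{h ≤ C}`, so the limit is `0`.

Birkhoff's theorem for nonnegative functions is proved as by Katznelson and Weiss: if every point
has some `n > 0` with `Sₙ F ≤ Sₙ G`, concatenating such blocks along orbits and integrating gives
`∫ F ≤ ∫ G`. Applied to the invariant functions `limsup Sₙ f / n` and `liminf Sₙ f / n`, this
yields `∫ limsup ≤ ∫ f ≤ ∫ liminf`.
-/

open Filter MeasureTheory Topology
open scoped ENNReal

namespace ENNReal

lemma limsup_mul_of_tendsto_one {r : ℕ → ℝ≥0∞} (hr : Tendsto r atTop (𝓝 1)) (u : ℕ → ℝ≥0∞) :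
    limsup (fun n => u n * r n) atTop = limsup u atTop := by
  refine le_antisymm ?_ ?_
  · calc limsup (u * r) atTop ≤ limsup u atTop * limsup r atTop :=
          limsup_mul_le' (.inr (by simp [hr.limsup_eq])) (.inr (by simp [hr.limsup_eq]))
      _ = limsup u atTop := by rw [hr.limsup_eq, mul_one]
  · calc limsup u atTop = limsup u atTop * liminf r atTop := by rw [hr.liminf_eq, mul_one]
      _ ≤ limsup (u * r) atTop := le_limsup_mul

lemma liminf_mul_of_tendsto_one {r : ℕ → ℝ≥0∞} (hr : Tendsto r atTop (𝓝 1)) (u : ℕ → ℝ≥0∞) :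
    liminf (fun n => u n * r n) atTop = liminf u atTop := by
  rw [show (fun n => u n * r n) = r * u from funext fun n => mul_comm _ _]
  refine le_antisymm ?_ ?_
  · calc liminf (r * u) atTop ≤ limsup r atTop * liminf u atTop :=
          liminf_mul_le (.inl (by simp [hr.limsup_eq])) (.inl (by simp [hr.limsup_eq]))
      _ = liminf u atTop := by rw [hr.limsup_eq, one_mul]
  · calc liminf u atTop = liminf r atTop * liminf u atTop := by rw [hr.liminf_eq, one_mul]
      _ ≤ liminf (r * u) atTop := le_liminf_mul

lemma div_add_one_mul_one_add_inv (a : ℝ≥0∞) {n : ℕ} (hn : n ≠ 0) :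
    a / (n + 1) * (1 + (n : ℝ≥0∞)⁻¹) = a / n := by
  have h1 : (1 + (n : ℝ≥0∞)⁻¹) = (n + 1) * (n : ℝ≥0∞)⁻¹ := by
    rw [add_mul, ENNReal.mul_inv_cancel (by exact_mod_cast hn) (natCast_ne_top n), one_mul]
  rw [div_eq_mul_inv, div_eq_mul_inv, mul_assoc, h1,
    ENNReal.inv_mul_cancel_left (by positivity) (by simp)]

lemma tendsto_one_add_inv_nat : Tendsto (fun n : ℕ => 1 + (n : ℝ≥0∞)⁻¹) atTop (𝓝 1) := by
  simpa using tendsto_const_nhds.add ENNReal.tendsto_inv_nat_nhds_zero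

lemma tendsto_div_add_one {c : ℝ≥0∞} (hc : c ≠ ⊤) :
    Tendsto (fun n : ℕ => c / (n + 1)) atTop (𝓝 0) := by
  have := ENNReal.tendsto_inv_nat_nhds_zero.comp (tendsto_add_atTop_nat 1)
  simpa [div_eq_mul_inv] using ENNReal.Tendsto.const_mul this (.inr hc)

lemma limsup_div_add_one (a : ℕ → ℝ≥0∞) :
    limsup (fun n => a n / (n + 1)) atTop = limsup (fun n => a n / n) atTop := by
  rw [← limsup_mul_of_tendsto_one tendsto_one_add_inv_nat]
  exact limsup_congr <| (eventually_ne_atTop 0).mono fun n hn =>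
    div_add_one_mul_one_add_inv _ hn

lemma liminf_div_add_one (a : ℕ → ℝ≥0∞) :
    liminf (fun n => a n / (n + 1)) atTop = liminf (fun n => a n / n) atTop := by
  rw [← liminf_mul_of_tendsto_one tendsto_one_add_inv_nat]
  exact liminf_congr <| (eventually_ne_atTop 0).mono fun n hn =>
    div_add_one_mul_one_add_inv _ hn

lemma limsup_div_eq_of_succ {a b : ℕ → ℝ≥0∞} {c : ℝ≥0∞} (hc : c ≠ ⊤)
    (h : ∀ n, b (n + 1) = c + a n) :
    limsup (fun n => b n / n) atTop = limsup (fun n => a n / n) atTop := by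
  rw [← limsup_nat_add _ 1, ← limsup_div_add_one]
  simp_rw [Nat.cast_add_one, h, ENNReal.add_div]
  exact limsup_add_of_left_tendsto_zero (tendsto_div_add_one hc) _

lemma liminf_div_eq_of_succ {a b : ℕ → ℝ≥0∞} {c : ℝ≥0∞} (hc : c ≠ ⊤)
    (h : ∀ n, b (n + 1) = c + a n) :
    liminf (fun n => b n / n) atTop = liminf (fun n => a n / n) atTop := by
  rw [← liminf_nat_add _ 1, ← liminf_div_add_one]
  simp_rw [Nat.cast_add_one, h, ENNReal.add_div]
  exact liminf_add_of_left_tendsto_zero (tendsto_div_add_one hc) _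

lemma le_of_forall_le_add_inv_mul {a b c : ℝ≥0∞} (hc : c ≠ ⊤)
    (h : ∀ n : ℕ, 0 < n → a ≤ b + (n : ℝ≥0∞)⁻¹ * c) : a ≤ b := by
  have hlim : Tendsto (fun n : ℕ => b + (n : ℝ≥0∞)⁻¹ * c) atTop (𝓝 b) := by
    simpa using tendsto_const_nhds.add
      (ENNReal.Tendsto.mul_const ENNReal.tendsto_inv_nat_nhds_zero (.inr hc))
  exact ge_of_tendsto hlim ((eventually_gt_atTop 0).mono h)

lemma le_of_forall_nat_mul_le {a b c : ℝ≥0∞} (hc : c ≠ ⊤)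
    (h : ∀ n : ℕ, n * a ≤ n * b + c) : a ≤ b := by
  refine le_of_forall_le_add_inv_mul hc fun n hn => ?_
  have hn0 : (n : ℝ≥0∞) ≠ 0 := by exact_mod_cast hn.ne'
  calc a = (n : ℝ≥0∞)⁻¹ * (n * a) := (ENNReal.inv_mul_cancel_left hn0 (natCast_ne_top n)).symm
    _ ≤ (n : ℝ≥0∞)⁻¹ * (n * b + c) := by gcongr; exact h n
    _ = b + (n : ℝ≥0∞)⁻¹ * c := by
      rw [mul_add, ENNReal.inv_mul_cancel_left hn0 (natCast_ne_top n)]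

lemma frequently_le_add_of_le_limsup {u : ℕ → ℝ≥0∞} {a ε : ℝ≥0∞} (ha : a ≤ limsup u atTop)
    (ha_top : a ≠ ⊤) (hε : ε ≠ 0) : ∃ᶠ n in atTop, a ≤ u n + ε := by
  rcases eq_or_ne a 0 with rfl | ha0
  · exact Frequently.of_forall fun _ => zero_le
  exact (frequently_lt_of_lt_limsup (by isBoundedDefault)
    ((ENNReal.sub_lt_self ha_top ha0 hε).trans_le ha)).mono fun n hn => tsub_le_iff_right.1 hn.le

lemma frequently_le_add_of_liminf_le {u : ℕ → ℝ≥0∞} {a ε : ℝ≥0∞} (ha : liminf u atTop ≤ a)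
    (hε : ε ≠ 0) : ∃ᶠ n in atTop, u n ≤ a + ε := by
  rcases eq_or_ne a ⊤ with rfl | ha_top
  · exact Frequently.of_forall fun _ => by simp
  exact (frequently_lt_of_liminf_lt (by isBoundedDefault)
    (ha.trans_lt (ENNReal.lt_add_right ha_top hε))).mono fun n hn => hn.le

lemma min_tsub_min_le (a b c : ℝ≥0∞) : min a c - min b c ≤ a - b :=
  tsub_le_iff_right.2 <| (min_le_min le_tsub_add le_add_self).trans (min_add_add_left _ _ _).le

end ENNReal

section Birkhoff

variable {α : Type*}

lemma monotone_birkhoffSum {M : Type*} [AddCommMonoid M] [PartialOrder M] [CanonicallyOrderedAdd M]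
    (T : α → α) (f : α → M) (x : α) : Monotone (birkhoffSum T f · x) := by
  intro m n hmn
  obtain ⟨k, rfl⟩ := Nat.exists_eq_add_of_le hmn
  exact (birkhoffSum_add T f m k x).ge.trans' le_self_add

lemma birkhoffSum_mono {M : Type*} [AddCommMonoid M] [PartialOrder M] [IsOrderedAddMonoid M]
    {T : α → α} {f g : α → M} (hfg : f ≤ g) (n : ℕ) (x : α) :
    birkhoffSum T f n x ≤ birkhoffSum T g n x :=
  Finset.sum_le_sum fun _ _ => hfg _

lemma birkhoffSum_le_birkhoffSum_add_of_forall_exists {M : Type*} [AddCommMonoid M] [PartialOrder M]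
    [CanonicallyOrderedAdd M] [IsOrderedAddMonoid M] {T : α → α} {F G : α → M} {N : ℕ}
    (h : ∀ x, ∃ n, 0 < n ∧ n ≤ N ∧ birkhoffSum T F n x ≤ birkhoffSum T G n x) (L : ℕ) (x : α) :
    birkhoffSum T F L x ≤ birkhoffSum T G (L + N) x := by
  induction L using Nat.strong_induction_on generalizing x with
  | _ L ih =>
  obtain ⟨n, hn0, hnN, hn⟩ := h x
  rcases le_or_gt n L with hnL | hLn
  · obtain ⟨k, rfl⟩ := Nat.exists_eq_add_of_le hnL
    rw [birkhoffSum_add, add_assoc, birkhoffSum_add]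
    exact add_le_add hn (ih k (by omega) _)
  · calc birkhoffSum T F L x ≤ birkhoffSum T F n x := monotone_birkhoffSum T F x hLn.le
      _ ≤ birkhoffSum T G n x := hn
      _ ≤ birkhoffSum T G (L + N) x := monotone_birkhoffSum T G x (by omega)

lemma birkhoffSum_comp_sub {G : Type*} [AddCommGroup G] (T : α → α) (h : α → G) (n : ℕ) (x : α) :
    birkhoffSum T (fun y => h (T y) - h y) n x = h (T^[n] x) - h x := by
  simpa [birkhoffSum, ← Function.iterate_succ_apply' T] using
    Finset.sum_range_sub (fun k => h (T^[k] x)) n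

noncomputable def birkhoffLimsup (T : α → α) (f : α → ℝ≥0∞) (x : α) : ℝ≥0∞ :=
  limsup (fun n : ℕ => birkhoffSum T f n x / n) atTop

noncomputable def birkhoffLiminf (T : α → α) (f : α → ℝ≥0∞) (x : α) : ℝ≥0∞ :=
  liminf (fun n : ℕ => birkhoffSum T f n x / n) atTop

variable {T : α → α} {f : α → ℝ≥0∞}

lemma birkhoffLimsup_comp (hf : ∀ x, f x ≠ ⊤) : birkhoffLimsup T f ∘ T = birkhoffLimsup T f :=
  funext fun x => (ENNReal.limsup_div_eq_of_succ (hf x) (birkhoffSum_succ' T f · x)).symm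

lemma birkhoffLiminf_comp (hf : ∀ x, f x ≠ ⊤) : birkhoffLiminf T f ∘ T = birkhoffLiminf T f :=
  funext fun x => (ENNReal.liminf_div_eq_of_succ (hf x) (birkhoffSum_succ' T f · x)).symm

lemma birkhoffSum_add_const (c : ℝ≥0∞) (n : ℕ) (x : α) :
    birkhoffSum T (fun y => f y + c) n x = birkhoffSum T f n x + n * c := by
  simp [birkhoffSum, Finset.sum_add_distrib]

lemma birkhoffSum_comp_of_comp_eq {β : Type*} {φ : α → β} (hφ : φ ∘ T = φ) (g : β → ℝ≥0∞)
    (n : ℕ) (x : α) : birkhoffSum T (fun y => g (φ y)) n x = n * g (φ x) := by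
  rw [show (fun y => g (φ y)) = g ∘ φ from rfl,
    birkhoffSum_of_comp_eq (by rw [Function.comp_assoc, hφ]), Pi.smul_apply, nsmul_eq_mul]
  rfl

lemma birkhoffSum_eq_mul_div {n : ℕ} (hn : n ≠ 0) (x : α) :
    birkhoffSum T f n x = n * (birkhoffSum T f n x / n) :=
  (ENNReal.mul_div_cancel (by exact_mod_cast hn) (ENNReal.natCast_ne_top n)).symm

lemma exists_mul_le_birkhoffSum_add {a ε : ℝ≥0∞} {x : α} (ha : a ≤ birkhoffLimsup T f x)
    (ha_top : a ≠ ⊤) (hε : ε ≠ 0) : ∃ n, 0 < n ∧ n * a ≤ birkhoffSum T f n x + n * ε := by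
  obtain ⟨n, hn, hn0⟩ := ((ENNReal.frequently_le_add_of_le_limsup ha ha_top hε).and_eventually
    (eventually_ne_atTop 0)).exists
  refine ⟨n, Nat.pos_of_ne_zero hn0, ?_⟩
  rw [birkhoffSum_eq_mul_div hn0, ← mul_add]
  exact mul_le_mul_right hn _

lemma exists_birkhoffSum_le_mul {a ε : ℝ≥0∞} {x : α} (ha : birkhoffLiminf T f x ≤ a)
    (hε : ε ≠ 0) : ∃ n, 0 < n ∧ birkhoffSum T f n x ≤ n * (a + ε) := by
  obtain ⟨n, hn, hn0⟩ := ((ENNReal.frequently_le_add_of_liminf_le ha hε).and_eventually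
    (eventually_ne_atTop 0)).exists
  refine ⟨n, Nat.pos_of_ne_zero hn0, ?_⟩
  rw [birkhoffSum_eq_mul_div hn0]
  exact mul_le_mul_right hn _

variable [MeasurableSpace α]

lemma Measurable.birkhoffSum {M : Type*} [AddCommMonoid M] [MeasurableSpace M] [MeasurableAdd₂ M]
    {g : α → M} (hg : Measurable g) (hT : Measurable T) (n : ℕ) :
    Measurable (_root_.birkhoffSum T g n) :=
  Finset.measurable_sum _ fun k _ => hg.comp (hT.iterate k)

lemma Measurable.birkhoffLimsup (hf : Measurable f) (hT : Measurable T) :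
    Measurable (_root_.birkhoffLimsup T f) :=
  .limsup fun n => (hf.birkhoffSum hT n).div_const _

lemma Measurable.birkhoffLiminf (hf : Measurable f) (hT : Measurable T) :
    Measurable (_root_.birkhoffLiminf T f) :=
  .liminf fun n => (hf.birkhoffSum hT n).div_const _

end Birkhoff

namespace MeasureTheory.MeasurePreserving

variable {α : Type*} [MeasurableSpace α] {μ : Measure α} {T : α → α}

lemma lintegral_birkhoffSum (hT : MeasurePreserving T μ μ) {f : α → ℝ≥0∞} (hf : Measurable f)
    (n : ℕ) : ∫⁻ x, birkhoffSum T f n x ∂μ = n * ∫⁻ x, f x ∂μ := by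
  simp only [birkhoffSum]
  rw [lintegral_finsetSum (f := fun k x => f (T^[k] x)) _
    fun k _ => hf.comp (hT.measurable.iterate k)]
  simp [(hT.iterate _).lintegral_comp hf]

lemma lintegral_le_of_forall_exists_le_birkhoffSum_le (hT : MeasurePreserving T μ μ)
    {F G : α → ℝ≥0∞} (hF : Measurable F) (hG : Measurable G) {N : ℕ}
    (h : ∀ x, ∃ n, 0 < n ∧ n ≤ N ∧ birkhoffSum T F n x ≤ birkhoffSum T G n x) :
    ∫⁻ x, F x ∂μ ≤ ∫⁻ x, G x ∂μ := by
  rcases eq_or_ne (∫⁻ x, G x ∂μ) ⊤ with hG_top | hG_top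
  · simp [hG_top]
  refine ENNReal.le_of_forall_nat_mul_le (c := N * ∫⁻ x, G x ∂μ) (by finiteness) fun L => ?_
  calc L * ∫⁻ x, F x ∂μ = ∫⁻ x, birkhoffSum T F L x ∂μ := (hT.lintegral_birkhoffSum hF L).symm
    _ ≤ ∫⁻ x, birkhoffSum T G (L + N) x ∂μ :=
      lintegral_mono (birkhoffSum_le_birkhoffSum_add_of_forall_exists h L)
    _ = L * ∫⁻ x, G x ∂μ + N * ∫⁻ x, G x ∂μ := by
      rw [hT.lintegral_birkhoffSum hG, Nat.cast_add, add_mul]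

/- Points with no good time `n ≤ N` are discarded; the truncated functions increase to `F`. -/
theorem lintegral_le_of_forall_exists_birkhoffSum_le (hT : MeasurePreserving T μ μ)
    {F G : α → ℝ≥0∞} (hF : Measurable F) (hG : Measurable G)
    (h : ∀ x, ∃ n, 0 < n ∧ birkhoffSum T F n x ≤ birkhoffSum T G n x) :
    ∫⁻ x, F x ∂μ ≤ ∫⁻ x, G x ∂μ := by
  let good (N : ℕ) : Set α := {x | ∃ n, 0 < n ∧ n ≤ N ∧ birkhoffSum T F n x ≤ birkhoffSum T G n x}
  have good_meas (N : ℕ) : MeasurableSet (good N) := by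
    simp only [good, Set.ofPred_exists, Set.ofPred_and]
    exact .iUnion fun n => (MeasurableSet.const _).inter <| (MeasurableSet.const _).inter <|
      measurableSet_le (hF.birkhoffSum hT.measurable n) (hG.birkhoffSum hT.measurable n)
  have good_mono : Monotone good := fun N N' hNN' x ⟨n, hn0, hnN, hn⟩ =>
    ⟨n, hn0, hnN.trans hNN', hn⟩
  have good_le (N : ℕ) : ∫⁻ x, (good N).indicator F x ∂μ ≤ ∫⁻ x, G x ∂μ := by
    refine hT.lintegral_le_of_forall_exists_le_birkhoffSum_le (hF.indicator (good_meas N)) hG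
      (N := N + 1) fun x => ?_
    by_cases hx : x ∈ good N
    · obtain ⟨n, hn0, hnN, hn⟩ := hx
      exact ⟨n, hn0, by omega, (birkhoffSum_mono (Set.indicator_le_self _ _) n x).trans hn⟩
    · exact ⟨1, one_pos, by omega, by simp [hx]⟩
  calc ∫⁻ x, F x ∂μ ≤ ∫⁻ x, ⨆ N, (good N).indicator F x ∂μ := lintegral_mono fun x => by
        obtain ⟨n, hn0, hn⟩ := h x
        have hx : x ∈ good n := ⟨n, hn0, le_rfl, hn⟩
        exact le_iSup_of_le n (Set.indicator_of_mem hx F).ge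
    _ = ⨆ N, ∫⁻ x, (good N).indicator F x ∂μ :=
      lintegral_iSup (fun N => hF.indicator (good_meas N))
        fun N N' hNN' => Set.indicator_le_indicator_of_subset (good_mono hNN') fun _ => zero_le
    _ ≤ ∫⁻ x, G x ∂μ := iSup_le good_le

lemma lintegral_comp_tsub_eq (hT : MeasurePreserving T μ μ) {u : α → ℝ≥0∞} (hu : Measurable u)
    (hu_int : ∫⁻ x, u x ∂μ ≠ ⊤) :
    ∫⁻ x, u (T x) - u x ∂μ = ∫⁻ x, u x - u (T x) ∂μ := by
  have hmax : ∫⁻ x, u x + (u (T x) - u x) ∂μ = ∫⁻ x, u (T x) + (u x - u (T x)) ∂μ :=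
    lintegral_congr fun x => by rw [add_tsub_eq_max, add_tsub_eq_max, max_comm]
  rwa [lintegral_add_left hu, lintegral_add_left (f := fun x => u (T x)) (hu.comp hT.measurable),
    hT.lintegral_comp hu,
    ENNReal.add_right_inj hu_int] at hmax

variable [IsFiniteMeasure μ] {f : α → ℝ≥0∞}

theorem lintegral_birkhoffLimsup_le (hT : MeasurePreserving T μ μ) (hf : Measurable f)
    (hf_top : ∀ x, f x ≠ ⊤) : ∫⁻ x, birkhoffLimsup T f x ∂μ ≤ ∫⁻ x, f x ∂μ := by
  have hmeas := hf.birkhoffLimsup hT.measurable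
  have htrunc (M : ℕ) : ∫⁻ x, min (birkhoffLimsup T f x) M ∂μ ≤ ∫⁻ x, f x ∂μ := by
    refine ENNReal.le_of_forall_le_add_inv_mul (measure_ne_top μ Set.univ) fun k hk => ?_
    calc ∫⁻ x, min (birkhoffLimsup T f x) M ∂μ ≤ ∫⁻ x, f x + (k : ℝ≥0∞)⁻¹ ∂μ := by
          refine hT.lintegral_le_of_forall_exists_birkhoffSum_le (hmeas.min measurable_const)
            (hf.add_const _) fun x => ?_
          obtain ⟨n, hn0, hn⟩ := exists_mul_le_birkhoffSum_add (min_le_left _ _)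
            (ne_top_of_le_ne_top (ENNReal.natCast_ne_top M) (min_le_right _ _))
            (ENNReal.inv_ne_zero.2 (ENNReal.natCast_ne_top k))
          refine ⟨n, hn0, ?_⟩
          rwa [birkhoffSum_comp_of_comp_eq (birkhoffLimsup_comp hf_top) (min · (M : ℝ≥0∞)),
            birkhoffSum_add_const]
      _ = ∫⁻ x, f x ∂μ + (k : ℝ≥0∞)⁻¹ * μ Set.univ := by
          rw [lintegral_add_right _ measurable_const, lintegral_const]
  calc ∫⁻ x, birkhoffLimsup T f x ∂μ = ∫⁻ x, ⨆ M : ℕ, min (birkhoffLimsup T f x) M ∂μ := by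
        simp_rw [← inf_iSup_eq, ENNReal.iSup_natCast, inf_top_eq]
    _ = ⨆ M : ℕ, ∫⁻ x, min (birkhoffLimsup T f x) M ∂μ :=
      lintegral_iSup (fun M => hmeas.min measurable_const)
        fun M M' h x => min_le_min_left _ (by exact_mod_cast h)
    _ ≤ ∫⁻ x, f x ∂μ := iSup_le htrunc

theorem lintegral_le_birkhoffLiminf (hT : MeasurePreserving T μ μ) (hf : Measurable f)
    (hf_top : ∀ x, f x ≠ ⊤) : ∫⁻ x, f x ∂μ ≤ ∫⁻ x, birkhoffLiminf T f x ∂μ := by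
  have hmeas := hf.birkhoffLiminf hT.measurable
  refine ENNReal.le_of_forall_le_add_inv_mul (measure_ne_top μ Set.univ) fun k hk => ?_
  calc ∫⁻ x, f x ∂μ ≤ ∫⁻ x, birkhoffLiminf T f x + (k : ℝ≥0∞)⁻¹ ∂μ := by
        refine hT.lintegral_le_of_forall_exists_birkhoffSum_le hf (hmeas.add_const _) fun x => ?_
        obtain ⟨n, hn0, hn⟩ := exists_birkhoffSum_le_mul le_rfl
          (ENNReal.inv_ne_zero.2 (ENNReal.natCast_ne_top k))
        refine ⟨n, hn0, ?_⟩
        rwa [birkhoffSum_comp_of_comp_eq (birkhoffLiminf_comp hf_top) (· + (k : ℝ≥0∞)⁻¹)]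
    _ = ∫⁻ x, birkhoffLiminf T f x ∂μ + (k : ℝ≥0∞)⁻¹ * μ Set.univ := by
        rw [lintegral_add_right _ measurable_const, lintegral_const]

theorem ae_tendsto_birkhoffSum_div (hT : MeasurePreserving T μ μ) (hf : Measurable f)
    (hf_top : ∀ x, f x ≠ ⊤) (hf_int : ∫⁻ x, f x ∂μ ≠ ⊤) :
    ∀ᵐ x ∂μ, birkhoffLimsup T f x ≠ ⊤ ∧
      Tendsto (fun n : ℕ => birkhoffSum T f n x / n) atTop (𝓝 (birkhoffLimsup T f x)) := by
  have hsup := hT.lintegral_birkhoffLimsup_le hf hf_top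
  have hinf := hT.lintegral_le_birkhoffLiminf hf hf_top
  have hmeas := hf.birkhoffLimsup hT.measurable
  have heq : birkhoffLiminf T f =ᵐ[μ] birkhoffLimsup T f :=
    ae_eq_of_ae_le_of_lintegral_le (ae_of_all _ fun x => liminf_le_limsup)
      (ne_top_of_le_ne_top hf_int ((lintegral_mono fun x => liminf_le_limsup).trans hsup))
      hmeas.aemeasurable (hsup.trans hinf)
  filter_upwards [heq, ae_lt_top hmeas (ne_top_of_le_ne_top hf_int hsup)] with x hx hlt
  exact ⟨hlt.ne, tendsto_of_liminf_eq_limsup hx rfl⟩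

theorem ae_tendsto_birkhoffAverage_of_nonneg (hT : MeasurePreserving T μ μ) {g : α → ℝ}
    (hg : Measurable g) (hg0 : ∀ x, 0 ≤ g x) (hg_int : Integrable g μ) :
    ∀ᵐ x ∂μ, ∃ l, Tendsto (birkhoffAverage ℝ T g · x) atTop (𝓝 l) := by
  filter_upwards [hT.ae_tendsto_birkhoffSum_div (ENNReal.measurable_ofReal.comp hg)
    (fun _ => ENNReal.ofReal_ne_top) hg_int.lintegral_lt_top.ne] with x ⟨hfin, hlim⟩
  refine ⟨_, ((ENNReal.tendsto_toReal hfin).comp hlim).congr fun n => ?_⟩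
  have hsum : birkhoffSum T (ENNReal.ofReal ∘ g) n x = ENNReal.ofReal (birkhoffSum T g n x) :=
    (ENNReal.ofReal_sum_of_nonneg fun k _ => hg0 _).symm
  have hsum_nonneg : 0 ≤ birkhoffSum T g n x := Finset.sum_nonneg fun k _ => hg0 _
  simp [hsum, birkhoffAverage, ENNReal.toReal_div, div_eq_inv_mul, hsum_nonneg]

theorem ae_tendsto_birkhoffAverage (hT : MeasurePreserving T μ μ) {g : α → ℝ}
    (hg : Integrable g μ) : ∀ᵐ x ∂μ, ∃ l, Tendsto (birkhoffAverage ℝ T g · x) atTop (𝓝 l) := by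
  have of_measurable {g : α → ℝ} (hgm : Measurable g) (hg : Integrable g μ) :
      ∀ᵐ x ∂μ, ∃ l, Tendsto (birkhoffAverage ℝ T g · x) atTop (𝓝 l) := by
    filter_upwards [hT.ae_tendsto_birkhoffAverage_of_nonneg (hgm.max measurable_const)
        (fun x => le_max_right _ _) hg.pos_part,
      hT.ae_tendsto_birkhoffAverage_of_nonneg (hgm.neg.max measurable_const)
        (fun x => le_max_right _ _) hg.neg_part] with x ⟨l₁, h₁⟩ ⟨l₂, h₂⟩
    refine ⟨l₁ - l₂, (h₁.sub h₂).congr fun n => ?_⟩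
    rw [← Pi.sub_apply, ← Pi.sub_apply (birkhoffAverage ℝ T _), ← birkhoffAverage_sub]
    congr
    funext y
    exact max_zero_sub_max_neg_zero_eq_self (g y)
  filter_upwards [of_measurable hg.1.stronglyMeasurable_mk.measurable (hg.congr hg.1.ae_eq_mk),
    ae_all_iff.2 (hT.quasiMeasurePreserving.birkhoffAverage_ae_eq_of_ae_eq ℝ hg.1.ae_eq_mk)]
    with x ⟨l, hl⟩ heq
  exact ⟨l, hl.congr fun n => (heq n).symm⟩

/- For bounded `u` the two integrals agree; Fatou's lemma passes to the limit along the
truncations `min u M`. -/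
lemma lintegral_comp_tsub_le (hT : MeasurePreserving T μ μ) {u : α → ℝ≥0∞} (hu : Measurable u)
    (hu_top : ∀ x, u x ≠ ⊤) :
    ∫⁻ x, u (T x) - u x ∂μ ≤ ∫⁻ x, u x - u (T x) ∂μ := by
  let v (M : ℕ) (x : α) : ℝ≥0∞ := min (u x) M
  have hv (M : ℕ) : Measurable (v M) := hu.min measurable_const
  have hv_int (M : ℕ) : ∫⁻ x, v M x ∂μ ≠ ⊤ := by
    refine ne_top_of_le_ne_top ?_ (lintegral_mono fun x => min_le_right (u x) (M : ℝ≥0∞))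
    simpa using ENNReal.mul_ne_top (ENNReal.natCast_ne_top M) (measure_ne_top μ Set.univ)
  have hv_eventually (x : α) : ∀ᶠ M : ℕ in atTop, v M (T x) - v M x = u (T x) - u x := by
    filter_upwards [ENNReal.tendsto_nat_nhds_top.eventually (eventually_ge_nhds (hu_top x).lt_top),
      ENNReal.tendsto_nat_nhds_top.eventually (eventually_ge_nhds (hu_top (T x)).lt_top)]
      with M hx hTx
    simp only [v, min_eq_left hx, min_eq_left hTx]
  calc ∫⁻ x, u (T x) - u x ∂μ = ∫⁻ x, liminf (fun M => v M (T x) - v M x) atTop ∂μ :=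
        lintegral_congr fun x => by rw [liminf_congr (hv_eventually x), liminf_const]
    _ ≤ liminf (fun M => ∫⁻ x, v M (T x) - v M x ∂μ) atTop :=
        lintegral_liminf_le fun M => ((hv M).comp hT.measurable).sub (hv M)
    _ = liminf (fun M => ∫⁻ x, v M x - v M (T x) ∂μ) atTop := by
        simp_rw [hT.lintegral_comp_tsub_eq (hv _) (hv_int _)]
    _ ≤ ∫⁻ x, u x - u (T x) ∂μ := liminf_le_of_frequently_le' <| .of_forall fun M =>
        lintegral_mono fun x => ENNReal.min_tsub_min_le _ _ _

theorem integrable_comp_sub (hT : MeasurePreserving T μ μ) {h : α → ℝ} (hh : Measurable h)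
    (h_nonneg : ∀ x, 0 ≤ h x) (h_int : Integrable (fun x => max (h x - h (T x)) 0) μ) :
    Integrable (fun x => h (T x) - h x) μ := by
  have hofReal (x y : α) :
      ENNReal.ofReal (max (h x - h y) 0) = ENNReal.ofReal (h x) - ENNReal.ofReal (h y) := by
    simp [ENNReal.ofReal_sub _ (h_nonneg y)]
  have hpos : Integrable (fun x => max (h (T x) - h x) 0) μ := by
    refine ⟨(((hh.comp hT.measurable).sub hh).max measurable_const).aestronglyMeasurable, ?_⟩
    rw [hasFiniteIntegral_iff_ofReal (f := fun x => max (h (T x) - h x) 0)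
      (ae_of_all _ fun x => le_max_right _ _)]
    calc ∫⁻ x, ENNReal.ofReal (max (h (T x) - h x) 0) ∂μ
        = ∫⁻ x, ENNReal.ofReal (h (T x)) - ENNReal.ofReal (h x) ∂μ := by simp_rw [hofReal]
      _ ≤ ∫⁻ x, ENNReal.ofReal (h x) - ENNReal.ofReal (h (T x)) ∂μ :=
        hT.lintegral_comp_tsub_le (ENNReal.measurable_ofReal.comp hh) fun _ => ENNReal.ofReal_ne_top
      _ = ∫⁻ x, ENNReal.ofReal (max (h x - h (T x)) 0) ∂μ := by simp_rw [hofReal]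
      _ < ⊤ := h_int.lintegral_lt_top
  refine (hpos.sub h_int).congr (ae_of_all _ fun x => ?_)
  simpa only [Pi.sub_apply, neg_sub] using max_zero_sub_max_neg_zero_eq_self (h (T x) - h x)

theorem ae_exists_frequently_le (hT : MeasurePreserving T μ μ) {h : α → ℝ} (hh : Measurable h) :
    ∀ᵐ x ∂μ, ∃ C : ℝ, ∃ᶠ n in atTop, h (T^[n] x) ≤ C := by
  have hrec (M : ℕ) := hT.conservative.ae_mem_imp_frequently_image_mem
    (measurableSet_le hh (measurable_const (a := (M : ℝ)))).nullMeasurableSet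
  filter_upwards [ae_all_iff.2 hrec] with x hx
  obtain ⟨M, hM⟩ := exists_nat_ge (h x)
  exact ⟨M, hx M hM⟩

end MeasureTheory.MeasurePreserving

lemma eq_zero_of_tendsto_inv_mul_of_frequently_le {u : ℕ → ℝ} {l C : ℝ} (hu0 : ∀ n, 0 ≤ u n)
    (hu : Tendsto (fun n : ℕ => (n : ℝ)⁻¹ * u n) atTop (𝓝 l)) (hC : ∃ᶠ n in atTop, u n ≤ C) :
    l = 0 := by
  have hC0 : Tendsto (fun n : ℕ => (n : ℝ)⁻¹ * C) atTop (𝓝 0) := by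
    simpa using tendsto_inv_atTop_nhds_zero_nat.mul_const C
  have hl : 0 ≤ 0 - l := ge_of_tendsto_of_frequently (hC0.sub hu) <|
    hC.mono fun n hn => sub_nonneg.2 (mul_le_mul_of_nonneg_left hn (by positivity))
  exact le_antisymm (by linarith) (ge_of_tendsto' hu fun n => mul_nonneg (by positivity) (hu0 n))

theorem stmt1 {Ω : Type*} [MeasurableSpace Ω] (μ : Measure Ω) [IsProbabilityMeasure μ]
    (T : Ω → Ω) (hT : MeasurePreserving T μ μ)
    (h : Ω → ℝ) (hmeas : Measurable h) (hpos : ∀ ω, 0 ≤ h ω)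
    (hint : Integrable (fun ω => max (h ω - h (T ω)) 0) μ) :
    ∀ᵐ ω ∂μ, Tendsto (fun n : ℕ => (n : ℝ)⁻¹ * h (T^[n] ω)) atTop (𝓝 0) := by
  filter_upwards [hT.ae_tendsto_birkhoffAverage (hT.integrable_comp_sub hmeas hpos hint),
    hT.ae_exists_frequently_le hmeas] with ω ⟨l, hl⟩ ⟨C, hC⟩
  have hconv : Tendsto (fun n : ℕ => (n : ℝ)⁻¹ * h (T^[n] ω)) atTop (𝓝 l) := by
    have h0 : Tendsto (fun n : ℕ => (n : ℝ)⁻¹ * h ω) atTop (𝓝 0) := by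
      simpa using tendsto_inv_atTop_nhds_zero_nat.mul_const (h ω)
    refine (zero_add l ▸ h0.add hl).congr fun n => ?_
    rw [birkhoffAverage, birkhoffSum_comp_sub, smul_eq_mul]
    ring
  obtain rfl := eq_zero_of_tendsto_inv_mul_of_frequently_le (fun n => hpos _) hconv hC
  exact hconv
end

section
/- Let (T, 𝒯, μ) be a finite positive measure space, S a separable complete metric space, and φ : T × S → ℝ̄ a measurable function (for the product σ-algebra). Then there is a set T' ∈ 𝒯 with μ(T \ T') = 0 such that the function t ↦ sup_{s∈S} φ(t,s) restricted to T' is measurable. -/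
/-!
For every `a`, the superlevel set `{t | a < ⨆ s, φ (t, s)}` is the projection of the measurable
set `φ ⁻¹' Ioi a`, so it suffices to show that projections of measurable subsets of `T × S` are
null-measurable; the supremum is then null-measurable, hence a.e. equal to a measurable function.

A measurable subset of `T × S` only involves countably many measurable subsets of `T`, so it is
the preimage of a Borel set `E' ⊆ (ℕ → Bool) × S` under `F × id` for a measurable
`F : T → ℕ → Bool`. Its projection is `F ⁻¹' (Prod.fst '' E')`, the preimage of an analytic set.

An analytic set `g '' univ` with `g : (ℕ → ℕ) → Y` continuous is null-measurable for every finite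
measure `ν`: continuity from below of the outer measure chooses bounds `u` such that the images
`g '' {σ | ∀ i < n, σ i ≤ u i}` all have outer measure `> c`, and compactness of
`{σ | ∀ i, σ i ≤ u i}` shows that the intersection of their closures, a closed set of measure
`≥ c`, still lies in the analytic set.
-/

open MeasureTheory Set Filter Topology

namespace MeasureTheory

section CantorReduction

variable {T Y : Type*} [MeasurableSpace T] [MeasurableSpace Y]

def IsCantorPreimage (E : Set (T × Y)) : Prop :=
  ∃ F : T → ℕ → Bool, Measurable F ∧ ∃ E' : Set ((ℕ → Bool) × Y), MeasurableSet E' ∧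
    E = Prod.map F id ⁻¹' E'

lemma isCantorPreimage_prod_univ {A : Set T} (hA : MeasurableSet A) :
    IsCantorPreimage (A ×ˢ (univ : Set Y)) := by
  classical
  refine ⟨fun t _ => decide (t ∈ A),
    measurable_pi_lambda _ fun _ => measurable_to_bool (by simpa [preimage]),
    {x | x 0 = true} ×ˢ univ,
    (measurableSet_eq_fun (measurable_pi_apply 0) measurable_const).prod .univ, ?_⟩
  ext ⟨t, y⟩
  simp

lemma isCantorPreimage_univ_prod {B : Set Y} (hB : MeasurableSet B) :
    IsCantorPreimage ((univ : Set T) ×ˢ B) :=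
  ⟨fun _ _ => true, measurable_const, univ ×ˢ B, MeasurableSet.univ.prod hB, by ext; simp⟩

lemma IsCantorPreimage.compl {E : Set (T × Y)} (hE : IsCantorPreimage E) :
    IsCantorPreimage Eᶜ := by
  obtain ⟨F, hF, E', hE', rfl⟩ := hE
  exact ⟨F, hF, E'ᶜ, hE'.compl, rfl⟩

/-- The maps `F i : T → ℕ → Bool` are merged into one by interleaving their coordinates. -/
lemma isCantorPreimage_iUnion {E : ℕ → Set (T × Y)} (hE : ∀ i, IsCantorPreimage (E i)) :
    IsCantorPreimage (⋃ i, E i) := by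
  choose F hF E' hE' hEq using hE
  have hrestrict : ∀ i, Measurable fun (x : ℕ → Bool) k => x (Nat.pair i k) := fun i =>
    measurable_pi_lambda _ fun k => measurable_pi_apply _
  refine ⟨fun t k => F (Nat.unpair k).1 t (Nat.unpair k).2,
    measurable_pi_lambda _ fun k => (measurable_pi_apply _).comp (hF _),
    ⋃ i, Prod.map (fun x k => x (Nat.pair i k)) id ⁻¹' E' i,
    .iUnion fun i => ((hrestrict i).prodMap measurable_id) (hE' i), ?_⟩
  simp only [preimage_iUnion, hEq]
  refine iUnion_congr fun i => ?_
  ext ⟨t, y⟩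
  simp only [mem_preimage, Prod.map_apply, id, Nat.unpair_pair]

lemma MeasurableSet.isCantorPreimage {E : Set (T × Y)} (hE : MeasurableSet E) :
    IsCantorPreimage E := by
  let m : MeasurableSpace (T × Y) :=
    { MeasurableSet' := IsCantorPreimage
      measurableSet_empty := by simpa using isCantorPreimage_univ_prod (T := T) .empty
      measurableSet_compl := fun _ => IsCantorPreimage.compl
      measurableSet_iUnion := fun _ => isCantorPreimage_iUnion }
  have hle : Prod.instMeasurableSpace ≤ m := by
    refine sup_le ?_ ?_
    · rintro _ ⟨A, hA, rfl⟩
      exact prod_univ (s := A) ▸ isCantorPreimage_prod_univ hA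
    · rintro _ ⟨B, hB, rfl⟩
      exact univ_prod (t := B) ▸ isCantorPreimage_univ_prod hB
  exact hle E hE

end CantorReduction

section AnalyticSet

def prefixBox (u : ℕ → ℕ) (n : ℕ) : Set (ℕ → ℕ) := {σ | ∀ i < n, σ i ≤ u i}

@[simp] lemma prefixBox_zero (u : ℕ → ℕ) : prefixBox u 0 = univ := by
  simp [prefixBox]

lemma antitone_prefixBox (u : ℕ → ℕ) : Antitone (prefixBox u) :=
  fun _ _ hmn _ hσ i hi => hσ i (hi.trans_le hmn)

lemma prefixBox_congr {u v : ℕ → ℕ} {n : ℕ} (h : ∀ i < n, u i = v i) :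
    prefixBox u n = prefixBox v n := by
  ext σ
  exact forall₂_congr fun i hi => by rw [h i hi]

lemma prefixBox_update_succ (u : ℕ → ℕ) (n k : ℕ) :
    prefixBox (Function.update u n k) (n + 1) = prefixBox u n ∩ {σ | σ n ≤ k} := by
  ext σ
  simp only [prefixBox, mem_inter_iff, mem_ofPred_eq, Nat.lt_succ_iff_lt_or_eq, or_imp,
    forall_and, forall_eq, Function.update_self]
  refine and_congr_left' (forall₂_congr fun i hi => ?_)
  rw [Function.update_of_ne hi.ne]

lemma iUnion_prefixBox_update_succ (u : ℕ → ℕ) (n : ℕ) :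
    ⋃ k, prefixBox (Function.update u n k) (n + 1) = prefixBox u n := by
  simp only [prefixBox_update_succ, ← inter_iUnion]
  exact inter_eq_left.2 fun σ _ => mem_iUnion.2 ⟨σ n, le_refl (σ n)⟩

lemma iInter_closure_image_prefixBox_subset {Y : Type*} [TopologicalSpace Y]
    [FirstCountableTopology Y] [T2Space Y] {g : (ℕ → ℕ) → Y} (hg : Continuous g) (u : ℕ → ℕ) :
    ⋂ n, closure (g '' prefixBox u n) ⊆ g '' univ.pi fun i => Iic (u i) := by
  intro y hy
  obtain ⟨V, hV⟩ := (𝓝 y).exists_antitone_basis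
  have hne : ∀ n, (V n ∩ g '' prefixBox u n).Nonempty := fun n =>
    mem_closure_iff_nhds.1 (mem_iInter.1 hy n) _ (hV.mem n)
  choose x hxV σ hσ hσx using hne
  have hbox : IsCompact (univ.pi fun i => Iic (u i)) :=
    isCompact_univ_pi fun i => (finite_Iic (u i)).isCompact
  obtain ⟨τ, hτ, φ, hφ, hlim⟩ := hbox.tendsto_subseq (x := fun n i => min (σ n i) (u i))
    fun n i _ => mem_Iic.2 (min_le_right _ _)
  have hσlim : Tendsto (σ ∘ φ) atTop (𝓝 τ) := by
    refine tendsto_pi_nhds.2 fun i => (tendsto_pi_nhds.1 hlim i).congr' ?_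
    filter_upwards [eventually_gt_atTop i] with k hk
    exact min_eq_left (hσ (φ k) i (hk.trans_le (hφ.id_le k)))
  have hgσlim : Tendsto (g ∘ σ ∘ φ) atTop (𝓝 y) := by
    simp only [Function.comp_def, hσx]
    exact (hV.tendsto hxV).comp hφ.tendsto_atTop
  exact ⟨τ, hτ, tendsto_nhds_unique ((hg.tendsto τ).comp hσlim) hgσlim⟩

variable {Y : Type*} [MeasurableSpace Y] (ν : Measure Y) (g : (ℕ → ℕ) → Y)

/-- The hypothesis sits under the `∃` so that `choose` gives a total choice of the next bound. -/
lemma exists_lt_measure_image_prefixBox_update (c : ENNReal) (u : ℕ → ℕ) (n : ℕ) :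
    ∃ k, c < ν (g '' prefixBox u n) → c < ν (g '' prefixBox (Function.update u n k) (n + 1)) := by
  by_cases hc : c < ν (g '' prefixBox u n)
  · have hmono : Monotone fun k => g '' prefixBox (Function.update u n k) (n + 1) :=
      fun k l hkl => image_mono <| by
        simp only [prefixBox_update_succ]
        exact inter_subset_inter_right _ fun σ hσ => le_trans hσ hkl
    rw [← iUnion_prefixBox_update_succ, image_iUnion, hmono.measure_iUnion, lt_iSup_iff] at hc
    obtain ⟨k, hk⟩ := hc
    exact ⟨k, fun _ => hk⟩
  · exact ⟨0, fun h => absurd h hc⟩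

lemma exists_forall_lt_measure_image_prefixBox {c : ENNReal} (hc : c < ν (range g)) :
    ∃ u, ∀ n, c < ν (g '' prefixBox u n) := by
  choose next hnext using exists_lt_measure_image_prefixBox_update ν g c
  let v : ℕ → ℕ → ℕ := fun n =>
    Nat.rec (motive := fun _ => ℕ → ℕ) 0 (fun n w => Function.update w n (next w n)) n
  have hv : ∀ n, c < ν (g '' prefixBox (v n) n) := by
    intro n
    induction n with
    | zero => simpa using hc
    | succ n ih => exact hnext (v n) n ih
  have hstable : ∀ i n, i < n → v n i = v (i + 1) i := by
    intro i n hin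
    induction n, hin using Nat.le_induction with
    | base => rfl
    | succ n hin ih => exact (Function.update_of_ne (by omega) _ _).trans ih
  refine ⟨fun i => v (i + 1) i, fun n => ?_⟩
  rw [prefixBox_congr fun i hi => (hstable i n hi).symm]
  exact hv n

end AnalyticSet

lemma nullMeasurableSet_of_forall_lt_exists_subset {α : Type*} [MeasurableSpace α]
    {μ : Measure α} [IsFiniteMeasure μ] {s : Set α}
    (h : ∀ c < μ s, ∃ t ⊆ s, MeasurableSet t ∧ c ≤ μ t) : NullMeasurableSet s μ := by
  rcases eq_zero_or_pos (μ s) with hs | hs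
  · exact .of_null hs
  obtain ⟨c, -, hcs, hlim⟩ := exists_seq_strictMono_tendsto' hs
  choose t hts ht hct using fun n => h (c n) (hcs n).2
  have hle : μ s ≤ μ (⋃ n, t n) :=
    le_of_tendsto' hlim fun n => (hct n).trans (measure_mono (subset_iUnion t n))
  exact (MeasurableSet.iUnion ht).nullMeasurableSet.congr
    (ae_eq_of_subset_of_measure_ge (iUnion_subset hts) hle
      (MeasurableSet.iUnion ht).nullMeasurableSet (measure_ne_top μ s))

theorem AnalyticSet.nullMeasurableSet {Y : Type*} [TopologicalSpace Y] [FirstCountableTopology Y]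
    [T2Space Y] [MeasurableSpace Y] [OpensMeasurableSpace Y] (ν : Measure Y) [IsFiniteMeasure ν]
    {s : Set Y} (hs : AnalyticSet s) : NullMeasurableSet s ν := by
  rw [AnalyticSet] at hs
  obtain rfl | ⟨g, hg, rfl⟩ := hs
  · exact nullMeasurableSet_empty
  refine nullMeasurableSet_of_forall_lt_exists_subset fun c hc => ?_
  obtain ⟨u, hu⟩ := exists_forall_lt_measure_image_prefixBox ν g hc
  have hclosed : ∀ n, MeasurableSet (closure (g '' prefixBox u n)) := fun n =>
    isClosed_closure.measurableSet
  refine ⟨⋂ n, closure (g '' prefixBox u n),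
    (iInter_closure_image_prefixBox_subset hg u).trans (image_subset_range _ _),
    .iInter hclosed, ?_⟩
  rw [Antitone.measure_iInter (fun m n hmn => closure_mono (image_mono (antitone_prefixBox u hmn)))
    (fun n => (hclosed n).nullMeasurableSet) ⟨0, measure_ne_top ν _⟩]
  exact le_iInf fun n => (hu n).le.trans (measure_mono subset_closure)

theorem MeasurableSet.nullMeasurableSet_image_fst {T Y : Type*} [MeasurableSpace T]
    [MeasurableSpace Y] [StandardBorelSpace Y] (μ : Measure T) [IsFiniteMeasure μ]
    {E : Set (T × Y)} (hE : MeasurableSet E) : NullMeasurableSet (Prod.fst '' E) μ := by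
  obtain ⟨F, hF, E', hE', rfl⟩ := hE.isCantorPreimage
  have himage : Prod.fst '' (Prod.map F id ⁻¹' E') = F ⁻¹' (Prod.fst '' E') := by
    ext t
    simp
  rw [himage]
  exact ((hE'.analyticSet_image measurable_fst).nullMeasurableSet (μ.map F)).preimage
    (hF.quasiMeasurePreserving μ)

theorem Measurable.nullMeasurable_iSup_snd {T Y β : Type*} [MeasurableSpace T]
    [MeasurableSpace Y] [StandardBorelSpace Y] [CompleteLinearOrder β] [TopologicalSpace β]
    [OrderTopology β] [SecondCountableTopology β] [MeasurableSpace β] [BorelSpace β]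
    (μ : Measure T) [IsFiniteMeasure μ] {φ : T × Y → β} (hφ : Measurable φ) :
    NullMeasurable (fun t => ⨆ y, φ (t, y)) μ := by
  refine measurable_of_Ioi fun a => ?_
  have hlevel : Prod.fst '' (φ ⁻¹' Ioi a) = (fun t => ⨆ y, φ (t, y)) ⁻¹' Ioi a := by
    ext t
    simp [lt_iSup_iff]
  exact hlevel ▸ (hφ measurableSet_Ioi).nullMeasurableSet_image_fst μ

theorem AEMeasurable.exists_measurable_restrict {T β : Type*} [MeasurableSpace T]
    [MeasurableSpace β] {μ : Measure T} {f : T → β} (hf : AEMeasurable f μ) :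
    ∃ T' : Set T, MeasurableSet T' ∧ μ T'ᶜ = 0 ∧ Measurable fun t : T' => f t := by
  let N := toMeasurable μ {t | f t ≠ hf.mk f t}
  refine ⟨Nᶜ, (measurableSet_toMeasurable _ _).compl, ?_, ?_⟩
  · rw [compl_compl, measure_toMeasurable]
    exact hf.ae_eq_mk
  · have hfg : (fun t : (Nᶜ : Set T) => f t) = fun t : (Nᶜ : Set T) => hf.mk f t := by
      funext t
      by_contra hne
      exact t.2 (subset_toMeasurable _ _ hne)
    rw [hfg]
    exact hf.measurable_mk.comp measurable_subtype_coe

end MeasureTheory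

open MeasureTheory

theorem stmt8 {T : Type*} [MeasurableSpace T] (μ : Measure T) [IsFiniteMeasure μ]
    {S : Type*} [MetricSpace S] [TopologicalSpace.SeparableSpace S] [CompleteSpace S]
    [MeasurableSpace S] [BorelSpace S]
    (φ : T × S → EReal) (hφ : Measurable φ) :
    ∃ T' : Set T, MeasurableSet T' ∧ μ T'ᶜ = 0 ∧
      Measurable fun t : T' => ⨆ s : S, φ ((t : T), s) :=
  (hφ.nullMeasurable_iSup_snd μ).aemeasurable.exists_measurable_restrict
end

section
/- Let D be a positive linear contraction on L^∞(X, μ) for a probability measure μ, satisfying D1 = 1 and ∫ Df dμ = ∫ f dμ for all bounded measurable f. Suppose μ is ergodic in the sense that every bounded measurable f with Df = f μ-a.e. is constant μ-a.e. Then for every f ∈ L¹(X, μ), the averages (1/n)·Σ_{k=0}^{n−1} D^k f converge μ-almost everywhere to the constant ∫ f dμ. -/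
/-!
The argument is the classical one through the Banach principle. Hopf's maximal ergodic lemma
gives the maximal inequality `ε μ {x | |A_n g x| > ε infinitely often} ≤ 2 ‖g‖₁` for the ergodic
averages `A_n = (1/n) ∑_{k<n} T^k`, so the integrable functions whose averages tend to `0` almost
everywhere form a closed subset of `L¹`. It contains every coboundary `T v - v` with `v ∈ L²`,
because `A_n (T v - v) = (T^n v - v) / n` and `∑ₙ ‖T^n v / n‖₂² < ∞`. Finally `T` induces a
contraction of `L²` whose fixed points are constant by ergodicity, so the closure of the range of
`T - 1` is the orthogonal complement of the constants: coboundaries are dense among the functions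
of mean zero in `L²`, hence in `L¹`.
-/

open Filter MeasureTheory Topology Finset

section

variable {E : Type*} [AddCommGroup E] [Module ℝ E] (T : Module.End ℝ E)

/-- Since `(0 : ℝ)⁻¹ = 0`, `ergodicAverage T 0 = 0`. -/
noncomputable def ergodicAverage (n : ℕ) : Module.End ℝ E :=
  (n : ℝ)⁻¹ • ∑ k ∈ range n, T ^ k

theorem ergodicAverage_mul_sub_one (n : ℕ) :
    ergodicAverage T n * (T - 1) = (n : ℝ)⁻¹ • (T ^ n - 1) := by
  rw [ergodicAverage, smul_mul_assoc, geom_sum_mul]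

theorem sum_range_succ_pow_apply (n : ℕ) (g : E) :
    (∑ k ∈ range (n + 1), T ^ k) g = T ((∑ k ∈ range n, T ^ k) g) + g := by
  rw [geom_sum_succ, LinearMap.add_apply, Module.End.mul_apply, Module.End.one_apply]

end

section

variable {X : Type*} (T : Module.End ℝ (X → ℝ))

theorem ergodicAverage_apply (n : ℕ) (f : X → ℝ) (x : X) :
    ergodicAverage T n f x = (n : ℝ)⁻¹ * (∑ k ∈ range n, T ^ k) f x :=
  rfl

noncomputable def maxErgodicSum (N : ℕ) (g : X → ℝ) : X → ℝ :=
  (range (N + 1)).sup' nonempty_range_add_one fun n => (∑ k ∈ range n, T ^ k) g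

theorem le_maxErgodicSum {n N : ℕ} (hn : n ≤ N) (g : X → ℝ) :
    (∑ k ∈ range n, T ^ k) g ≤ maxErgodicSum T N g :=
  le_sup' (fun n => (∑ k ∈ range n, T ^ k) g) (mem_range.2 (Nat.lt_succ_of_le hn))

theorem maxErgodicSum_nonneg (N : ℕ) (g : X → ℝ) : 0 ≤ maxErgodicSum T N g := by
  simpa using le_maxErgodicSum T N.zero_le g

theorem maxErgodicSum_pos_iff (N : ℕ) (g : X → ℝ) (x : X) :
    0 < maxErgodicSum T N g x ↔ ∃ n ≤ N, 0 < (∑ k ∈ range n, T ^ k) g x := by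
  simp [maxErgodicSum, Finset.sup'_apply, lt_sup'_iff]

end

/-- If `z ⊥ range (T - 1)` then `⟪T z, z⟫ = ‖z‖²`, which together with `‖T z‖ ≤ ‖z‖` forces
`T z = z`. -/
theorem ContinuousLinearMap.mem_closure_range_sub_one {𝕜 E : Type*} [RCLike 𝕜]
    [NormedAddCommGroup E] [InnerProductSpace 𝕜 E] [CompleteSpace E] (T : E →L[𝕜] E)
    (hT : ‖T‖ ≤ 1) {u : E} (hu : ∀ z, T z = z → inner 𝕜 z u = 0) :
    u ∈ closure (LinearMap.range ((T : E →ₗ[𝕜] E) - 1) : Set E) := by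
  rw [← Submodule.topologicalClosure_coe, SetLike.mem_coe,
    ← Submodule.orthogonal_orthogonal_eq_closure, Submodule.mem_orthogonal]
  intro z hz
  refine hu z (eq_of_norm_le_re_inner_eq_norm_sq (𝕜 := 𝕜)
    (by simpa using T.le_of_opNorm_le hT z) ?_)
  have h := Submodule.inner_right_of_mem_orthogonal (LinearMap.mem_range_self _ z) hz
  rw [LinearMap.sub_apply, Module.End.one_apply, ContinuousLinearMap.coe_coe, inner_sub_left,
    sub_eq_zero] at h
  rw [h, inner_self_eq_norm_sq]

section

variable {X : Type*} [MeasurableSpace X] {μ : Measure X}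

theorem ae_tendsto_zero_of_forall_pos {ι : Type*} {l : Filter ι} {u : ι → X → ℝ}
    (h : ∀ ε > 0, ∀ᵐ x ∂μ, ∀ᶠ n in l, |u n x| ≤ ε) :
    ∀ᵐ x ∂μ, Tendsto (u · x) l (𝓝 0) := by
  have hk : ∀ᵐ x ∂μ, ∀ k : ℕ, ∀ᶠ n in l, |u n x| ≤ 1 / (k + 1) :=
    ae_all_iff.2 fun k => h _ (by positivity)
  filter_upwards [hk] with x hx
  rw [Metric.tendsto_nhds]
  intro ε hε
  obtain ⟨k, hk⟩ := exists_nat_one_div_lt hε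
  filter_upwards [hx k] with n hn
  rw [Real.dist_0_eq_abs]
  linarith

theorem ae_tendsto_zero_of_summable_integral_sq {F : ℕ → X → ℝ} (hF : ∀ n, MemLp (F n) 2 μ)
    (h : Summable fun n => ∫ x, F n x ^ 2 ∂μ) :
    ∀ᵐ x ∂μ, Tendsto (F · x) atTop (𝓝 0) := by
  set G : ℕ → X → ENNReal := fun n x => ENNReal.ofReal (F n x ^ 2)
  have hGm : ∀ n, AEMeasurable (G n) μ := fun n =>
    (hF n).integrable_sq.aemeasurable.ennreal_ofReal
  have hG : ∑' n, ∫⁻ x, G n x ∂μ ≠ ⊤ := by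
    simp_rw [G, ← ofReal_integral_eq_lintegral_ofReal (hF _).integrable_sq
      (ae_of_all _ fun _ => sq_nonneg _)]
    rw [← ENNReal.ofReal_tsum_of_nonneg (fun n => integral_nonneg fun _ => sq_nonneg _) h]
    exact ENNReal.ofReal_ne_top
  have hfin : ∀ᵐ x ∂μ, ∑' n, G n x ≠ ⊤ := by
    refine (ae_lt_top' (AEMeasurable.tsum hGm) ?_).mono fun x hx => hx.ne
    rwa [lintegral_tsum hGm]
  filter_upwards [hfin] with x hx
  have hsq : Tendsto (fun n => F n x ^ 2) atTop (𝓝 0) := by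
    simpa [G, Function.comp_def, ENNReal.toReal_ofReal (sq_nonneg _)] using
      (ENNReal.tendsto_toReal ENNReal.zero_ne_top).comp
        (ENNReal.tendsto_atTop_zero_of_tsum_ne_top hx)
  rw [tendsto_zero_iff_abs_tendsto_zero]
  simpa [Function.comp_def, Real.sqrt_sq_eq_abs] using (Real.continuous_sqrt.tendsto 0).comp hsq

theorem setIntegral_le_integral_abs {g : X → ℝ} (hg : Integrable g μ) (s : Set X) :
    ∫ x in s, g x ∂μ ≤ ∫ x, |g x| ∂μ :=
  (setIntegral_mono hg.integrableOn hg.abs.integrableOn fun x => le_abs_self (g x)).trans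
    (setIntegral_le_integral hg.abs (Eventually.of_forall fun x => abs_nonneg (g x)))

theorem integral_abs_eq_toReal_eLpNorm_one {f : X → ℝ} (hf : AEStronglyMeasurable f μ) :
    ∫ x, |f x| ∂μ = (eLpNorm f 1 μ).toReal := by
  rw [eLpNorm_one_eq_lintegral_enorm, ← integral_norm_eq_lintegral_enorm hf]
  simp [Real.norm_eq_abs]

theorem exists_memLp_two_near [IsProbabilityMeasure μ] {f : X → ℝ} (hfi : Integrable f μ)
    (hf0 : ∫ x, f x ∂μ = 0) {δ : ℝ} (hδ : 0 < δ) :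
    ∃ u, Measurable u ∧ MemLp u 2 μ ∧ ∫ x, u x ∂μ = 0 ∧ ∫ x, |f x - u x| ∂μ < δ := by
  obtain ⟨s, hs, -⟩ := (memLp_one_iff_integrable.2 hfi).exists_simpleFunc_eLpNorm_sub_lt
    ENNReal.one_ne_top (ENNReal.ofReal_pos.2 (half_pos hδ)).ne'
  have hsi := s.integrable_of_isFiniteMeasure (μ := μ)
  have hfsi : Integrable (fun x => |f x - s x|) μ := (hfi.sub hsi).abs
  have hfs : ∫ x, |f x - s x| ∂μ < δ / 2 := by
    rw [show (fun x => |f x - s x|) = fun x => |(f - s) x| from rfl,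
      integral_abs_eq_toReal_eLpNorm_one (hfi.sub hsi).1]
    exact ENNReal.toReal_lt_of_lt_ofReal hs
  set c := ∫ x, s x ∂μ
  have hc : |c| ≤ ∫ x, |f x - s x| ∂μ := by
    have : c = -∫ x, (f x - s x) ∂μ := by rw [integral_sub hfi hsi, hf0, zero_sub, neg_neg]
    rw [this, abs_neg]
    exact abs_integral_le_integral_abs
  refine ⟨⇑s - fun _ => c, s.measurable.sub measurable_const,
    (s.memLp_of_isFiniteMeasure 2 μ).sub (memLp_const c), ?_, ?_⟩
  · simp [integral_sub hsi (integrable_const c), c]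
  calc ∫ x, |f x - (s x - c)| ∂μ ≤ ∫ x, (|f x - s x| + |c|) ∂μ := by
        refine integral_mono (hfi.sub (hsi.sub (integrable_const c))).abs
          (hfsi.add (integrable_const _)) fun x => ?_
        simpa [sub_sub_eq_add_sub, add_sub_right_comm] using abs_add_le (f x - s x) c
    _ = ∫ x, |f x - s x| ∂μ + |c| := by
        rw [integral_add hfsi (integrable_const _), integral_const]; simp
    _ < δ := by linarith

theorem real_inner_toLp {f g : X → ℝ} (hf : MemLp f 2 μ) (hg : MemLp g 2 μ) :
    inner ℝ (hf.toLp f) (hg.toLp g) = ∫ x, f x * g x ∂μ := by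
  rw [L2.inner_def]
  refine integral_congr_ae ?_
  filter_upwards [hf.coeFn_toLp, hg.coeFn_toLp] with x hfx hgx
  simp [hfx, hgx, mul_comm]

theorem norm_toLp_sq {f : X → ℝ} (hf : MemLp f 2 μ) : ‖hf.toLp f‖ ^ 2 = ∫ x, f x ^ 2 ∂μ := by
  rw [← real_inner_self_eq_norm_sq, real_inner_toLp]
  simp [sq]

theorem integral_abs_le_norm_toLp [IsProbabilityMeasure μ] {f : X → ℝ} (hf : MemLp f 2 μ) :
    ∫ x, |f x| ∂μ ≤ ‖hf.toLp f‖ := by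
  rw [Lp.norm_toLp, integral_abs_eq_toReal_eLpNorm_one hf.1]
  exact ENNReal.toReal_mono hf.eLpNorm_ne_top (eLpNorm_le_eLpNorm_of_exponent_le one_le_two hf.1)

noncomputable def measurableRep (f : Lp ℝ 2 μ) : X → ℝ := (Lp.aestronglyMeasurable f).mk f

theorem measurable_measurableRep (f : Lp ℝ 2 μ) : Measurable (measurableRep f) :=
  (Lp.aestronglyMeasurable f).stronglyMeasurable_mk.measurable

theorem coeFn_ae_eq_measurableRep (f : Lp ℝ 2 μ) : f =ᵐ[μ] measurableRep f :=
  (Lp.aestronglyMeasurable f).ae_eq_mk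

theorem memLp_measurableRep (f : Lp ℝ 2 μ) : MemLp (measurableRep f) 2 μ :=
  (Lp.memLp f).ae_eq (coeFn_ae_eq_measurableRep f)

theorem toLp_measurableRep (f : Lp ℝ 2 μ) : (memLp_measurableRep f).toLp _ = f :=
  (MemLp.toLp_congr _ (Lp.memLp f) (coeFn_ae_eq_measurableRep f).symm).trans
    (Lp.toLp_coeFn f (Lp.memLp f))

structure IsMarkovOperator (μ : Measure X) (T : Module.End ℝ (X → ℝ)) : Prop where
  nonneg : ∀ f, 0 ≤ f → 0 ≤ T f
  measurable : ∀ f, Measurable f → Measurable (T f)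
  ae_congr : ∀ f g, f =ᵐ[μ] g → T f =ᵐ[μ] T g
  map_one : T 1 = 1
  integrable : ∀ f, Integrable f μ → Integrable (T f) μ
  integral_eq : ∀ f, Integrable f μ → ∫ x, T f x ∂μ = ∫ x, f x ∂μ

def IsErgodicOperator (μ : Measure X) (T : Module.End ℝ (X → ℝ)) : Prop :=
  ∀ f : X → ℝ, Measurable f → (∃ c, ∀ x, |f x| ≤ c) → T f =ᵐ[μ] f → ∃ c : ℝ, f =ᵐ[μ] fun _ => c

namespace IsMarkovOperator

variable {T U : Module.End ℝ (X → ℝ)}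

theorem mono (hT : IsMarkovOperator μ T) {f g : X → ℝ} (h : f ≤ g) : T f ≤ T g := by
  simpa using hT.nonneg (g - f) (sub_nonneg.2 h)

theorem map_const (hT : IsMarkovOperator μ T) (c : ℝ) : T (fun _ => c) = fun _ => c := by
  have hc : (fun _ => c) = c • (1 : X → ℝ) := by ext; simp
  rw [hc, map_smul, hT.map_one]

theorem one : IsMarkovOperator μ 1 :=
  ⟨fun _ hf => hf, fun _ hf => hf, fun _ _ h => h, rfl, fun _ hf => hf, fun _ _ => rfl⟩

theorem mul (hT : IsMarkovOperator μ T) (hU : IsMarkovOperator μ U) :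
    IsMarkovOperator μ (T * U) where
  nonneg f hf := hT.nonneg _ (hU.nonneg f hf)
  measurable f hf := hT.measurable _ (hU.measurable f hf)
  ae_congr f g h := hT.ae_congr _ _ (hU.ae_congr f g h)
  map_one := by rw [Module.End.mul_apply, hU.map_one, hT.map_one]
  integrable f hf := hT.integrable _ (hU.integrable f hf)
  integral_eq f hf := (hT.integral_eq _ (hU.integrable f hf)).trans (hU.integral_eq f hf)

theorem pow (hT : IsMarkovOperator μ T) (n : ℕ) : IsMarkovOperator μ (T ^ n) := by
  induction n with
  | zero => exact one
  | succ n ih => rw [pow_succ]; exact ih.mul hT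

/-- Jensen's inequality for the square, from `0 ≤ T ((f - t)²)` at `t = T f x`. -/
theorem sq_apply_le (hT : IsMarkovOperator μ T) (f : X → ℝ) (x : X) :
    T f x ^ 2 ≤ T (f ^ 2) x := by
  set t := T f x
  have h := hT.nonneg ((f - fun _ => t) ^ 2) (fun y => sq_nonneg _) x
  have hexp : (f - fun _ => t) ^ 2 = f ^ 2 + (-2 * t) • f + fun _ => t ^ 2 := by
    ext y
    simp only [Pi.pow_apply, Pi.sub_apply, Pi.add_apply, Pi.smul_apply, smul_eq_mul]
    ring
  rw [hexp, map_add, map_add, map_smul, hT.map_const] at h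
  simp only [Pi.add_apply, Pi.smul_apply, smul_eq_mul, Pi.zero_apply] at h
  nlinarith

theorem integrable_sq (hT : IsMarkovOperator μ T) {f : X → ℝ} (hf : Measurable f)
    (hf2 : MemLp f 2 μ) : Integrable (fun x => T f x ^ 2) μ := by
  refine (hT.integrable _ hf2.integrable_sq).mono'
    ((hT.measurable f hf).pow_const 2).aestronglyMeasurable (Eventually.of_forall fun x => ?_)
  rw [Real.norm_eq_abs, abs_of_nonneg (sq_nonneg _)]
  exact hT.sq_apply_le f x

theorem memLp_two (hT : IsMarkovOperator μ T) {f : X → ℝ} (hf : Measurable f)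
    (hf2 : MemLp f 2 μ) : MemLp (T f) 2 μ :=
  (memLp_two_iff_integrable_sq (hT.measurable f hf).aestronglyMeasurable).2
    (hT.integrable_sq hf hf2)

theorem integral_sq_le (hT : IsMarkovOperator μ T) {f : X → ℝ} (hf : Measurable f)
    (hf2 : MemLp f 2 μ) : ∫ x, T f x ^ 2 ∂μ ≤ ∫ x, f x ^ 2 ∂μ :=
  calc ∫ x, T f x ^ 2 ∂μ ≤ ∫ x, T (f ^ 2) x ∂μ :=
        integral_mono (hT.integrable_sq hf hf2) (hT.integrable _ hf2.integrable_sq)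
          (hT.sq_apply_le f)
    _ = ∫ x, f x ^ 2 ∂μ := hT.integral_eq _ hf2.integrable_sq

theorem measurable_sum_pow (hT : IsMarkovOperator μ T) {g : X → ℝ} (hg : Measurable g) (n : ℕ) :
    Measurable ((∑ k ∈ range n, T ^ k) g) := by
  rw [LinearMap.sum_apply, Finset.sum_fn]
  exact Finset.measurable_sum _ fun k _ => (hT.pow k).measurable g hg

theorem integrable_sum_pow (hT : IsMarkovOperator μ T) {g : X → ℝ} (hg : Integrable g μ)
    (n : ℕ) : Integrable ((∑ k ∈ range n, T ^ k) g) μ := by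
  rw [LinearMap.sum_apply]
  exact integrable_finsetSum' _ fun k _ => (hT.pow k).integrable g hg

theorem sum_pow_apply_const (hT : IsMarkovOperator μ T) (n : ℕ) (c : ℝ) :
    (∑ k ∈ range n, T ^ k) (fun _ => c) = fun _ => n * c := by
  ext x
  simp [LinearMap.sum_apply, (hT.pow _).map_const]

theorem ergodicAverage_const (hT : IsMarkovOperator μ T) {n : ℕ} (hn : n ≠ 0) (c : ℝ) :
    ergodicAverage T n (fun _ => c) = fun _ => c := by
  ext x
  rw [ergodicAverage_apply, hT.sum_pow_apply_const]
  field_simp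

theorem measurable_maxErgodicSum (hT : IsMarkovOperator μ T) {g : X → ℝ} (hg : Measurable g)
    (N : ℕ) : Measurable (maxErgodicSum T N g) :=
  measurable_sup' _ fun n _ => hT.measurable_sum_pow hg n

theorem integrable_maxErgodicSum (hT : IsMarkovOperator μ T) {g : X → ℝ} (hg : Integrable g μ)
    (N : ℕ) : Integrable (maxErgodicSum T N g) μ :=
  sup'_induction _ _ (p := (Integrable · μ)) (fun _ h₁ _ h₂ => h₁.sup h₂)
    fun n _ => hT.integrable_sum_pow hg n

/-- The maximum is attained at some `S_n g` with `n ≥ 1` (as `S₀ g = 0`), and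
`S_n g = g + T (S_{n-1} g) ≤ g + T M`. -/
theorem maxErgodicSum_le_add_apply (hT : IsMarkovOperator μ T) {g : X → ℝ} {N : ℕ} {x : X}
    (hx : 0 < maxErgodicSum T N g x) : maxErgodicSum T N g x ≤ g x + T (maxErgodicSum T N g) x := by
  obtain ⟨n, hn, hMn⟩ := exists_mem_eq_sup' nonempty_range_add_one
    fun n => (∑ k ∈ range n, T ^ k) g x
  rw [← Finset.sup'_apply] at hMn
  change maxErgodicSum T N g x = _ at hMn
  cases n with
  | zero => simp [hMn] at hx
  | succ n =>
    rw [hMn, sum_range_succ_pow_apply, Pi.add_apply, add_comm]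
    gcongr
    exact hT.mono (le_maxErgodicSum T (by simp only [mem_range] at hn; omega) g) x

/-- Hopf's maximal ergodic lemma: integrate `M ≤ g + T M` over `E = {M > 0}`, off which the
nonnegative function `M` vanishes, and use `∫ T M = ∫ M`. -/
theorem hopf_maximal (hT : IsMarkovOperator μ T) {g : X → ℝ} (hgm : Measurable g)
    (hgi : Integrable g μ) (N : ℕ) :
    0 ≤ ∫ x in {x | ∃ n ≤ N, 0 < (∑ k ∈ range n, T ^ k) g x}, g x ∂μ := by
  set M := maxErgodicSum T N g
  have hMi := hT.integrable_maxErgodicSum hgi N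
  have hTM := hT.integrable M hMi
  set E := {x | ∃ n ≤ N, 0 < (∑ k ∈ range n, T ^ k) g x}
  have hE : E = {x | 0 < M x} := by ext x; simp [E, M, maxErgodicSum_pos_iff]
  have hEm : MeasurableSet E :=
    hE ▸ measurableSet_lt measurable_const (hT.measurable_maxErgodicSum hgm N)
  have hMoff : ∫ x in E, M x ∂μ = ∫ x, M x ∂μ :=
    setIntegral_eq_integral_of_forall_compl_eq_zero fun x hx =>
      le_antisymm (not_lt.1 (by rwa [hE] at hx)) (maxErgodicSum_nonneg T N g x)
  have : ∫ x, M x ∂μ ≤ ∫ x in E, g x ∂μ + ∫ x, M x ∂μ :=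
    calc ∫ x, M x ∂μ = ∫ x in E, M x ∂μ := hMoff.symm
      _ ≤ ∫ x in E, (g x + T M x) ∂μ :=
        setIntegral_mono_on hMi.integrableOn (hgi.add hTM).integrableOn hEm fun x hx =>
          hT.maxErgodicSum_le_add_apply (by rwa [hE] at hx)
      _ = ∫ x in E, g x ∂μ + ∫ x in E, T M x ∂μ :=
        integral_add hgi.integrableOn hTM.integrableOn
      _ ≤ ∫ x in E, g x ∂μ + ∫ x, T M x ∂μ := add_le_add_right (setIntegral_le_integral hTM
          (Eventually.of_forall (hT.nonneg M (maxErgodicSum_nonneg T N g)))) _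
      _ = ∫ x in E, g x ∂μ + ∫ x, M x ∂μ := by rw [hT.integral_eq M hMi]
  linarith

theorem mul_measureReal_exists_lt_sum_le [IsFiniteMeasure μ] (hT : IsMarkovOperator μ T)
    {g : X → ℝ} (hgm : Measurable g) (hgi : Integrable g μ) (c : ℝ) :
    c * μ.real {x | ∃ n : ℕ, c * n < (∑ k ∈ range n, T ^ k) g x} ≤ ∫ x, |g x| ∂μ := by
  set E : ℕ → Set X := fun N => {x | ∃ n ≤ N, 0 < (∑ k ∈ range n, T ^ k) (g - fun _ => c) x}
  have hE : {x | ∃ n : ℕ, c * n < (∑ k ∈ range n, T ^ k) g x} = ⋃ N, E N := by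
    ext x
    simp only [E, Set.mem_ofPred_eq, Set.mem_iUnion, map_sub, Pi.sub_apply, sub_pos,
      hT.sum_pow_apply_const, mul_comm c]
    exact ⟨fun ⟨n, hn⟩ => ⟨n, n, le_rfl, hn⟩, fun ⟨_, n, _, hn⟩ => ⟨n, hn⟩⟩
  have hmono : Monotone E := fun N N' h x ⟨n, hn, hx⟩ => ⟨n, hn.trans h, hx⟩
  have hbound : ∀ N, c * μ.real (E N) ≤ ∫ x, |g x| ∂μ := by
    intro N
    have hopf : 0 ≤ ∫ x in E N, (g x - c) ∂μ :=
      hT.hopf_maximal (hgm.sub measurable_const) (hgi.sub (integrable_const c)) N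
    rw [integral_sub hgi.integrableOn (integrable_const c).integrableOn,
      setIntegral_const, smul_eq_mul] at hopf
    linarith [setIntegral_le_integral_abs hgi (E N)]
  rw [hE]
  exact le_of_tendsto (((ENNReal.tendsto_toReal (measure_ne_top _ _)).comp
    (tendsto_measure_iUnion_atTop hmono)).const_mul c) (Eventually.of_forall hbound)

theorem mul_measureReal_frequently_lt_abs_le [IsFiniteMeasure μ] (hT : IsMarkovOperator μ T)
    {g : X → ℝ} (hgm : Measurable g) (hgi : Integrable g μ) (ε : ℝ) :
    ε * μ.real {x | ∃ᶠ n in atTop, ε < |ergodicAverage T n g x|} ≤ 2 * ∫ x, |g x| ∂μ := by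
  rcases le_or_gt ε 0 with hε | hε
  · exact (mul_nonpos_of_nonpos_of_nonneg hε measureReal_nonneg).trans
      (mul_nonneg zero_le_two (integral_nonneg fun x => abs_nonneg _))
  set A := {x | ∃ n : ℕ, ε * n < (∑ k ∈ range n, T ^ k) g x}
  set B := {x | ∃ n : ℕ, ε * n < (∑ k ∈ range n, T ^ k) (-g) x}
  have hsub : {x | ∃ᶠ n in atTop, ε < |ergodicAverage T n g x|} ⊆ A ∪ B := by
    intro x hx
    obtain ⟨n, hn⟩ := hx.exists
    rw [ergodicAverage_apply] at hn
    rcases eq_or_ne n 0 with rfl | hn0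
    · simp only [Nat.cast_zero, inv_zero, zero_mul, abs_zero] at hn
      linarith
    rw [abs_mul, abs_inv, Nat.abs_cast, lt_inv_mul_iff₀ (by positivity), mul_comm] at hn
    rcases lt_abs.1 hn with h | h
    · exact Or.inl ⟨n, h⟩
    · exact Or.inr ⟨n, by simpa using h⟩
  have hA := hT.mul_measureReal_exists_lt_sum_le hgm hgi ε
  have hB := hT.mul_measureReal_exists_lt_sum_le hgm.neg hgi.neg ε
  simp only [Pi.neg_apply, abs_neg] at hB
  calc ε * μ.real {x | ∃ᶠ n in atTop, ε < |ergodicAverage T n g x|}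
      ≤ ε * (μ.real A + μ.real B) :=
        mul_le_mul_of_nonneg_left ((measureReal_mono hsub).trans (measureReal_union_le A B)) hε.le
    _ ≤ 2 * ∫ x, |g x| ∂μ := by linarith

/-- The Banach principle: by the maximal inequality, the functions whose ergodic averages tend
to zero almost everywhere form a closed set in `L¹`. -/
theorem ae_tendsto_ergodicAverage_zero_of_approx [IsFiniteMeasure μ] (hT : IsMarkovOperator μ T)
    {f : X → ℝ} (hfm : Measurable f) (hfi : Integrable f μ)
    (happrox : ∀ δ > 0, ∃ g, Measurable g ∧ Integrable g μ ∧
      (∀ᵐ x ∂μ, Tendsto (fun n => ergodicAverage T n g x) atTop (𝓝 0)) ∧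
      ∫ x, |f x - g x| ∂μ < δ) :
    ∀ᵐ x ∂μ, Tendsto (fun n => ergodicAverage T n f x) atTop (𝓝 0) := by
  refine ae_tendsto_zero_of_forall_pos fun ε hε => ?_
  set bad := {x | ∃ᶠ n in atTop, ε < |ergodicAverage T n f x|}
  suffices μ.real bad ≤ 0 by
    have h0 : μ bad = 0 := (measureReal_eq_zero_iff (measure_ne_top μ bad)).1
      (le_antisymm this measureReal_nonneg)
    filter_upwards [measure_eq_zero_iff_ae_notMem.1 h0] with x hx
    simpa [bad] using hx
  refine le_of_forall_pos_le_add fun η hη => ?_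
  obtain ⟨g, hgm, hgi, hg, hfg⟩ := happrox (ε * η / 4) (by positivity)
  have hsub : bad ⊆ {x | ∃ᶠ n in atTop, ε / 2 < |ergodicAverage T n (f - g) x|} ∪
      {x | ¬ Tendsto (fun n => ergodicAverage T n g x) atTop (𝓝 0)} := by
    intro x hx
    refine or_iff_not_imp_right.2 fun hgx => ?_
    simp only [Set.mem_ofPred_eq, not_not] at hgx
    have hsmall := hgx.eventually (eventually_abs_sub_lt 0 (half_pos hε))
    refine (hx.and_eventually hsmall).mono fun n ⟨hfn, hgn⟩ => ?_
    rw [map_sub, Pi.sub_apply]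
    rw [sub_zero] at hgn
    linarith [abs_sub_abs_le_abs_sub (ergodicAverage T n f x) (ergodicAverage T n g x)]
  have hnull : μ.real {x | ¬ Tendsto (fun n => ergodicAverage T n g x) atTop (𝓝 0)} = 0 := by
    rw [measureReal_def, ae_iff.1 hg, ENNReal.toReal_zero]
  have hbad : μ.real bad ≤ μ.real {x | ∃ᶠ n in atTop, ε / 2 < |ergodicAverage T n (f - g) x|} :=
    (measureReal_mono hsub).trans ((measureReal_union_le _ _).trans (by rw [hnull, add_zero]))
  have hmax := hT.mul_measureReal_frequently_lt_abs_le (hfm.sub hgm) (hfi.sub hgi) (ε / 2)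
  simp only [Pi.sub_apply] at hmax
  nlinarith

theorem ae_tendsto_inv_mul_pow_apply (hT : IsMarkovOperator μ T) {v : X → ℝ}
    (hv : Measurable v) (hv2 : MemLp v 2 μ) :
    ∀ᵐ x ∂μ, Tendsto (fun n : ℕ => (n : ℝ)⁻¹ * (T ^ n) v x) atTop (𝓝 0) := by
  refine ae_tendsto_zero_of_summable_integral_sq
    (fun n => ((hT.pow n).memLp_two hv hv2).const_mul _) ?_
  have hbound : ∀ n : ℕ, ∫ x, ((n : ℝ)⁻¹ * (T ^ n) v x) ^ 2 ∂μ ≤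
      ((n : ℝ) ^ 2)⁻¹ * ∫ x, v x ^ 2 ∂μ := by
    intro n
    simp_rw [mul_pow, integral_const_mul, inv_pow]
    exact mul_le_mul_of_nonneg_left ((hT.pow n).integral_sq_le hv hv2) (by positivity)
  refine Summable.of_nonneg_of_le (fun n => integral_nonneg fun x => sq_nonneg _) hbound ?_
  exact (Real.summable_nat_pow_inv.2 one_lt_two).mul_right _

theorem ae_tendsto_ergodicAverage_coboundary (hT : IsMarkovOperator μ T) {v : X → ℝ}
    (hv : Measurable v) (hv2 : MemLp v 2 μ) :
    ∀ᵐ x ∂μ, Tendsto (fun n => ergodicAverage T n (T v - v) x) atTop (𝓝 0) := by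
  filter_upwards [hT.ae_tendsto_inv_mul_pow_apply hv hv2] with x hx
  have h : ∀ n, ergodicAverage T n (T v - v) x = (n : ℝ)⁻¹ * (T ^ n) v x - (n : ℝ)⁻¹ * v x := by
    intro n
    rw [show T v - v = (T - 1) v from rfl, ← Module.End.mul_apply, ergodicAverage_mul_sub_one]
    simp [mul_sub]
  simp_rw [h]
  simpa using hx.sub (tendsto_inv_atTop_nhds_zero_nat.mul_const (v x))

theorem ae_eq_of_apply_ae_le (hT : IsMarkovOperator μ T) {f : X → ℝ} (hf : Integrable f μ)
    (h : T f ≤ᵐ[μ] f) : T f =ᵐ[μ] f :=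
  (integral_eq_iff_of_ae_le (hT.integrable f hf) hf h).1 (hT.integral_eq f hf)

theorem ae_eq_of_ae_le_apply (hT : IsMarkovOperator μ T) {f : X → ℝ} (hf : Integrable f μ)
    (h : f ≤ᵐ[μ] T f) : T f =ᵐ[μ] f :=
  ((integral_eq_iff_of_ae_le hf (hT.integrable f hf) h).1 (hT.integral_eq f hf).symm).symm

theorem apply_inf_ae_eq (hT : IsMarkovOperator μ T) {f g : X → ℝ} (hf : Integrable f μ)
    (hg : Integrable g μ) (hTf : T f =ᵐ[μ] f) (hTg : T g =ᵐ[μ] g) : T (f ⊓ g) =ᵐ[μ] f ⊓ g := by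
  refine hT.ae_eq_of_apply_ae_le (hf.inf hg) ?_
  filter_upwards [hTf, hTg] with x hfx hgx
  exact le_inf (hfx ▸ hT.mono inf_le_left x) (hgx ▸ hT.mono inf_le_right x)

theorem apply_sup_ae_eq (hT : IsMarkovOperator μ T) {f g : X → ℝ} (hf : Integrable f μ)
    (hg : Integrable g μ) (hTf : T f =ᵐ[μ] f) (hTg : T g =ᵐ[μ] g) : T (f ⊔ g) =ᵐ[μ] f ⊔ g := by
  refine hT.ae_eq_of_ae_le_apply (hf.sup hg) ?_
  filter_upwards [hTf, hTg] with x hfx hgx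
  exact sup_le (hfx ▸ hT.mono le_sup_left x) (hgx ▸ hT.mono le_sup_right x)

end IsMarkovOperator

/-- The truncations `max (min z m) (-m)` of an integrable fixed point are bounded fixed points. -/
theorem IsErgodicOperator.exists_ae_eq_const [IsFiniteMeasure μ] {T : Module.End ℝ (X → ℝ)}
    (herg : IsErgodicOperator μ T) (hT : IsMarkovOperator μ T) {z : X → ℝ} (hzm : Measurable z)
    (hzi : Integrable z μ) (hfix : T z =ᵐ[μ] z) : ∃ c : ℝ, z =ᵐ[μ] fun _ => c := by
  set trunc : ℕ → X → ℝ := fun m => z ⊓ (fun _ => (m : ℝ)) ⊔ fun _ => -(m : ℝ)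
  have hconst : ∀ m, ∃ c : ℝ, trunc m =ᵐ[μ] fun _ => c := by
    intro m
    have hc : ∀ c : ℝ, T (fun _ => c) =ᵐ[μ] fun _ => c := fun c => (hT.map_const c).eventuallyEq
    refine herg _ ((hzm.inf measurable_const).sup measurable_const)
      ⟨m, fun x => abs_le.2 ⟨le_sup_right, sup_le inf_le_right (by simp)⟩⟩ ?_
    exact hT.apply_sup_ae_eq (hzi.inf (integrable_const _)) (integrable_const _)
      (hT.apply_inf_ae_eq hzi (integrable_const _) hfix (hc _)) (hc _)
  choose c hc using hconst
  have htrunc : ∀ x (m : ℕ), |z x| ≤ m → trunc m x = z x := fun x m hm => by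
    simp [trunc, min_eq_left (abs_le.1 hm).2, (abs_le.1 hm).1]
  rcases eq_or_ne μ 0 with rfl | hμ
  · exact ⟨0, by simp [EventuallyEq]⟩
  have hall : ∀ᵐ x ∂μ, ∀ m, trunc m x = c m := ae_all_iff.2 hc
  have := ae_neBot.2 hμ
  obtain ⟨x₀, hx₀⟩ := hall.exists
  refine ⟨z x₀, hall.mono fun x hx => ?_⟩
  obtain ⟨m, hm⟩ := exists_nat_ge (max |z x| |z x₀|)
  rw [← htrunc x m (le_of_max_le_left hm), ← htrunc x₀ m (le_of_max_le_right hm), hx, hx₀]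

namespace IsMarkovOperator

variable {T : Module.End ℝ (X → ℝ)}

theorem norm_toLp_le (hT : IsMarkovOperator μ T) {f : X → ℝ} (hf : Measurable f)
    (hf2 : MemLp f 2 μ) : ‖(hT.memLp_two hf hf2).toLp (T f)‖ ≤ ‖hf2.toLp f‖ := by
  refine (pow_le_pow_iff_left₀ (norm_nonneg _) (norm_nonneg _) two_ne_zero).1 ?_
  rw [norm_toLp_sq, norm_toLp_sq]
  exact hT.integral_sq_le hf hf2

noncomputable def toL2 (hT : IsMarkovOperator μ T) : Lp ℝ 2 μ →L[ℝ] Lp ℝ 2 μ :=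
  LinearMap.mkContinuous
    { toFun f := (hT.memLp_two (measurable_measurableRep f) (memLp_measurableRep f)).toLp
        (T (measurableRep f))
      map_add' f g := by
        rw [← MemLp.toLp_add, MemLp.toLp_eq_toLp_iff, ← map_add]
        refine hT.ae_congr _ _ ?_
        filter_upwards [coeFn_ae_eq_measurableRep (f + g), Lp.coeFn_add f g,
          coeFn_ae_eq_measurableRep f, coeFn_ae_eq_measurableRep g] with x h h' hf hg
        rw [Pi.add_apply, ← h, h', Pi.add_apply, hf, hg]
      map_smul' c f := by
        rw [RingHom.id_apply, ← MemLp.toLp_const_smul, MemLp.toLp_eq_toLp_iff, ← map_smul]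
        refine hT.ae_congr _ _ ?_
        filter_upwards [coeFn_ae_eq_measurableRep (c • f), Lp.coeFn_smul c f,
          coeFn_ae_eq_measurableRep f] with x h h' hf
        rw [Pi.smul_apply, ← h, h', Pi.smul_apply, hf] }
    1 fun f => by
      rw [one_mul]
      exact (hT.norm_toLp_le (measurable_measurableRep f) _).trans_eq
        (congrArg norm (toLp_measurableRep f))

theorem norm_toL2_le (hT : IsMarkovOperator μ T) : ‖hT.toL2‖ ≤ 1 :=
  LinearMap.mkContinuous_norm_le _ zero_le_one _

theorem toL2_toLp (hT : IsMarkovOperator μ T) {f : X → ℝ} (hf : Measurable f)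
    (hf2 : MemLp f 2 μ) : hT.toL2 (hf2.toLp f) = (hT.memLp_two hf hf2).toLp (T f) := by
  change (hT.memLp_two (measurable_measurableRep _) (memLp_measurableRep _)).toLp
    (T (measurableRep _)) = _
  rw [MemLp.toLp_eq_toLp_iff]
  exact hT.ae_congr _ _ ((coeFn_ae_eq_measurableRep _).symm.trans hf2.coeFn_toLp)

theorem exists_ae_eq_const_of_toL2_eq [IsFiniteMeasure μ] (hT : IsMarkovOperator μ T)
    (herg : IsErgodicOperator μ T) {z : Lp ℝ 2 μ} (hz : hT.toL2 z = z) :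
    ∃ c : ℝ, z =ᵐ[μ] fun _ => c := by
  rw [← toLp_measurableRep z, hT.toL2_toLp (measurable_measurableRep z),
    MemLp.toLp_eq_toLp_iff] at hz
  obtain ⟨c, hc⟩ := herg.exists_ae_eq_const hT (measurable_measurableRep z)
    ((memLp_measurableRep z).integrable one_le_two) hz
  exact ⟨c, (coeFn_ae_eq_measurableRep z).trans hc⟩

variable [IsProbabilityMeasure μ]

/-- In `L²` the closure of the range of `T - 1` is the orthogonal complement of the fixed points,
which are the constants. -/
theorem exists_coboundary_near (hT : IsMarkovOperator μ T) (herg : IsErgodicOperator μ T)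
    {u : X → ℝ} (hu2 : MemLp u 2 μ) (hu0 : ∫ x, u x ∂μ = 0) {δ : ℝ} (hδ : 0 < δ) :
    ∃ v, Measurable v ∧ MemLp v 2 μ ∧ ∫ x, |u x - (T v x - v x)| ∂μ < δ := by
  have horth : ∀ z, hT.toL2 z = z → inner ℝ z (hu2.toLp u) = 0 := by
    intro z hz
    obtain ⟨c, hc⟩ := hT.exists_ae_eq_const_of_toL2_eq herg hz
    rw [← toLp_measurableRep z, real_inner_toLp]
    calc ∫ x, measurableRep z x * u x ∂μ = ∫ x, c * u x ∂μ := by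
          refine integral_congr_ae ?_
          filter_upwards [hc, coeFn_ae_eq_measurableRep z] with x hcx hzx
          rw [← hzx, hcx]
      _ = 0 := by rw [integral_const_mul, hu0, mul_zero]
  obtain ⟨_, ⟨y, rfl⟩, hw⟩ := Metric.mem_closure_iff.1
    (hT.toL2.mem_closure_range_sub_one hT.norm_toL2_le horth) δ hδ
  have hv := measurable_measurableRep y
  have hv2 := memLp_measurableRep y
  refine ⟨measurableRep y, hv, hv2, ?_⟩
  have hy : ((hT.toL2 : Lp ℝ 2 μ →ₗ[ℝ] Lp ℝ 2 μ) - 1) y =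
      ((hT.memLp_two hv hv2).sub hv2).toLp (T (measurableRep y) - measurableRep y) := by
    conv_lhs => rw [← toLp_measurableRep y]
    rw [LinearMap.sub_apply, ContinuousLinearMap.coe_coe, hT.toL2_toLp hv, Module.End.one_apply,
      MemLp.toLp_sub]
  have h := integral_abs_le_norm_toLp (hu2.sub ((hT.memLp_two hv hv2).sub hv2))
  rw [MemLp.toLp_sub hu2 ((hT.memLp_two hv hv2).sub hv2), ← hy, ← dist_eq_norm] at h
  exact h.trans_lt hw

theorem ae_tendsto_ergodicAverage_zero_of_memLp (hT : IsMarkovOperator μ T)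
    (herg : IsErgodicOperator μ T) {u : X → ℝ} (hum : Measurable u) (hu2 : MemLp u 2 μ)
    (hu0 : ∫ x, u x ∂μ = 0) :
    ∀ᵐ x ∂μ, Tendsto (fun n => ergodicAverage T n u x) atTop (𝓝 0) := by
  refine hT.ae_tendsto_ergodicAverage_zero_of_approx hum (hu2.integrable one_le_two)
    fun δ hδ => ?_
  obtain ⟨v, hv, hv2, hlt⟩ := hT.exists_coboundary_near herg hu2 hu0 hδ
  exact ⟨T v - v, (hT.measurable v hv).sub hv,
    ((hT.memLp_two hv hv2).sub hv2).integrable one_le_two,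
    hT.ae_tendsto_ergodicAverage_coboundary hv hv2, hlt⟩

theorem ae_tendsto_ergodicAverage_zero (hT : IsMarkovOperator μ T)
    (herg : IsErgodicOperator μ T) {f : X → ℝ} (hfm : Measurable f) (hfi : Integrable f μ)
    (hf0 : ∫ x, f x ∂μ = 0) :
    ∀ᵐ x ∂μ, Tendsto (fun n => ergodicAverage T n f x) atTop (𝓝 0) := by
  refine hT.ae_tendsto_ergodicAverage_zero_of_approx hfm hfi fun δ hδ => ?_
  obtain ⟨u, hum, hu2, hu0, hlt⟩ := exists_memLp_two_near hfi hf0 hδ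
  exact ⟨u, hum, hu2.integrable one_le_two,
    hT.ae_tendsto_ergodicAverage_zero_of_memLp herg hum hu2 hu0, hlt⟩

theorem ae_tendsto_ergodicAverage (hT : IsMarkovOperator μ T) (herg : IsErgodicOperator μ T)
    {f : X → ℝ} (hfi : Integrable f μ) :
    ∀ᵐ x ∂μ, Tendsto (fun n => ergodicAverage T n f x) atTop (𝓝 (∫ x, f x ∂μ)) := by
  set g := hfi.1.mk f
  have hfg : f =ᵐ[μ] g := hfi.1.ae_eq_mk
  have hgi : Integrable g μ := hfi.congr hfg
  set c := ∫ x, f x ∂μ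
  have h0 : ∫ x, (g x - c) ∂μ = 0 := by
    rw [integral_sub hgi (integrable_const c), ← integral_congr_ae hfg]; simp [c]
  have hiter : ∀ᵐ x ∂μ, ∀ k : ℕ, (T ^ k) f x = (T ^ k) g x :=
    ae_all_iff.2 fun k => (hT.pow k).ae_congr f g hfg
  filter_upwards [hT.ae_tendsto_ergodicAverage_zero herg
    (hfi.1.stronglyMeasurable_mk.measurable.sub measurable_const)
    (hgi.sub (integrable_const c)) h0, hiter] with x hx hxk
  have heq : ∀ n ≠ 0, ergodicAverage T n f x = ergodicAverage T n (g - fun _ => c) x + c := by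
    intro n hn
    rw [map_sub, Pi.sub_apply, hT.ergodicAverage_const hn, ergodicAverage_apply,
      ergodicAverage_apply, LinearMap.sum_apply, LinearMap.sum_apply, Finset.sum_apply,
      Finset.sum_apply]
    simp [hxk]
  have hlim := hx.add_const c
  rw [zero_add] at hlim
  refine hlim.congr' ?_
  filter_upwards [eventually_ne_atTop 0] with n hn
  exact (heq n hn).symm

end IsMarkovOperator

end

theorem stmt14_general {X : Type*} [MeasurableSpace X] (μ : Measure X) [IsProbabilityMeasure μ]
    (D : (X → ℝ) → (X → ℝ))
    (hadd : ∀ f g : X → ℝ, D (f + g) = D f + D g)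
    (hsmul : ∀ (c : ℝ) (f : X → ℝ), D (c • f) = c • D f)
    (hpos : ∀ f : X → ℝ, (∀ x, 0 ≤ f x) → ∀ x, 0 ≤ D f x)
    (hmeas : ∀ f : X → ℝ, Measurable f → Measurable (D f))
    (hcongr : ∀ f g : X → ℝ, f =ᵐ[μ] g → D f =ᵐ[μ] D g)
    (hone : D (fun _ => 1) = fun _ => 1)
    (hpreserve : ∀ f : X → ℝ, Integrable f μ →
      Integrable (D f) μ ∧ ∫ x, D f x ∂μ = ∫ x, f x ∂μ)
    (hergodic : ∀ f : X → ℝ, Measurable f → (∃ c : ℝ, ∀ x, |f x| ≤ c) →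
      D f =ᵐ[μ] f → ∃ c : ℝ, f =ᵐ[μ] fun _ => c) :
    ∀ f : X → ℝ, Integrable f μ →
      ∀ᵐ x ∂μ, Tendsto (fun n : ℕ => (n : ℝ)⁻¹ * ∑ k ∈ Finset.range n, D^[k] f x)
        atTop (𝓝 (∫ x, f x ∂μ)) := by
  intro f hfi
  let T : Module.End ℝ (X → ℝ) := { toFun := D, map_add' := hadd, map_smul' := hsmul }
  have hT : IsMarkovOperator μ T :=
    ⟨hpos, hmeas, hcongr, hone, fun f hf => (hpreserve f hf).1, fun f hf => (hpreserve f hf).2⟩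
  simpa [ergodicAverage_apply, LinearMap.sum_apply, Module.End.pow_apply, T] using
    hT.ae_tendsto_ergodicAverage hergodic hfi

theorem stmt14 {X : Type*} [MeasurableSpace X] (μ : Measure X) [IsProbabilityMeasure μ]
    (D : (X → ℝ) → (X → ℝ))
    (hadd : ∀ f g : X → ℝ, D (f + g) = D f + D g)
    (hsmul : ∀ (c : ℝ) (f : X → ℝ), D (c • f) = c • D f)
    (hpos : ∀ f : X → ℝ, (∀ x, 0 ≤ f x) → ∀ x, 0 ≤ D f x)
    (hcontr : ∀ (f : X → ℝ) (c : ℝ), (∀ x, |f x| ≤ c) → ∀ x, |D f x| ≤ c)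
    (hmeas : ∀ f : X → ℝ, Measurable f → Measurable (D f))
    (hcongr : ∀ f g : X → ℝ, f =ᵐ[μ] g → D f =ᵐ[μ] D g)
    (hone : D (fun _ => 1) = fun _ => 1)
    (hpreserve : ∀ f : X → ℝ, Integrable f μ →
      Integrable (D f) μ ∧ ∫ x, D f x ∂μ = ∫ x, f x ∂μ)
    (hergodic : ∀ f : X → ℝ, Measurable f → (∃ c : ℝ, ∀ x, |f x| ≤ c) →
      D f =ᵐ[μ] f → ∃ c : ℝ, f =ᵐ[μ] fun _ => c) :
    ∀ f : X → ℝ, Integrable f μ →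
      ∀ᵐ x ∂μ, Tendsto (fun n : ℕ => (n : ℝ)⁻¹ * ∑ k ∈ Finset.range n, D^[k] f x)
        atTop (𝓝 (∫ x, f x ∂μ)) :=
  stmt14_general μ D hadd hsmul hpos hmeas hcongr hone hpreserve hergodic
end

section
/- Let (X, 𝒮, μ) be a probability space and D a Markov operator on L¹(X, μ) preserving μ (positive, D1 = 1, ∫Df dμ = ∫f dμ). If f ∈ L¹(X, μ) satisfies Df = f μ-a.e. and every D-invariant measurable set has measure 0 or 1 (where a set A is D-invariant if Dχ_A = χ_A μ-a.e.), then f is constant μ-a.e. -/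
open Filter MeasureTheory Topology

theorem stmt15 {X : Type*} [MeasurableSpace X] (μ : Measure X) [IsProbabilityMeasure μ]
    (D : (X → ℝ) → (X → ℝ))
    (hadd : ∀ f g : X → ℝ, D (f + g) = D f + D g)
    (hsmul : ∀ (c : ℝ) (f : X → ℝ), D (c • f) = c • D f)
    (hpos : ∀ f : X → ℝ, (∀ x, 0 ≤ f x) → ∀ x, 0 ≤ D f x)
    (hmeas : ∀ f : X → ℝ, Measurable f → Measurable (D f))
    (hcongr : ∀ f g : X → ℝ, f =ᵐ[μ] g → D f =ᵐ[μ] D g)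
    (hone : D (fun _ => 1) = fun _ => 1)
    (hpreserve : ∀ f : X → ℝ, Integrable f μ →
      Integrable (D f) μ ∧ ∫ x, D f x ∂μ = ∫ x, f x ∂μ)
    (hinv : ∀ A : Set X, MeasurableSet A →
      D (A.indicator fun _ => (1 : ℝ)) =ᵐ[μ] A.indicator (fun _ => (1 : ℝ)) →
      μ A = 0 ∨ μ A = 1)
    (f : X → ℝ) (hfmeas : Measurable f) (hfint : Integrable f μ)
    (hfix : D f =ᵐ[μ] f) :
    ∃ c : ℝ, f =ᵐ[μ] fun _ => c := by
  classical
  -- D is monotone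
  have hmono : ∀ g h : X → ℝ, (∀ x, g x ≤ h x) → ∀ x, D g x ≤ D h x := by
    intro g h hle x
    have h1 : g + (h - g) = h := by funext y; simp
    have h2 := hadd g (h - g)
    rw [h1] at h2
    have h3 : 0 ≤ D (h - g) x := hpos (h - g) (fun y => by
      simp only [Pi.sub_apply, sub_nonneg]; exact hle y) x
    have h4 := congrFun h2 x
    simp only [Pi.add_apply] at h4
    linarith
  -- constants are exactly fixed
  have hconst : ∀ c : ℝ, D (fun _ => c) = fun _ => c := by
    intro c
    have h1 : (fun _ : X => c) = c • (fun _ : X => (1 : ℝ)) := by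
      funext x; simp
    rw [h1, hsmul, hone]
  -- if g ≤ᵐ D g and g integrable then D g =ᵐ g
  have eqfix : ∀ g : X → ℝ, Integrable g μ → g ≤ᵐ[μ] D g → D g =ᵐ[μ] g := by
    intro g hgint hle
    obtain ⟨hDint, hDeq⟩ := hpreserve g hgint
    have hsub : Integrable (D g - g) μ := hDint.sub hgint
    have hnn : 0 ≤ᵐ[μ] (D g - g) := hle.mono (fun x hx => by
      simp only [Pi.sub_apply, Pi.zero_apply, sub_nonneg]; exact hx)
    have hint0 : ∫ x, (D g - g) x ∂μ = 0 := by
      simp only [Pi.sub_apply]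
      rw [integral_sub hDint hgint, hDeq, sub_self]
    have h0 := (integral_eq_zero_iff_of_nonneg_ae hnn hsub).1 hint0
    filter_upwards [h0] with x hx
    have : D g x - g x = 0 := hx
    linarith
  -- positive part of a fixed function is fixed
  have hpospart : ∀ g : X → ℝ, Integrable g μ → D g =ᵐ[μ] g →
      D (fun x => max (g x) 0) =ᵐ[μ] (fun x => max (g x) 0) := by
    intro g hgint hgfix
    have hi : Integrable (fun x => max (g x) 0) μ := hgint.pos_part
    apply eqfix _ hi
    have h1 : ∀ x, D g x ≤ D (fun x => max (g x) 0) x :=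
      hmono _ _ (fun x => le_max_left _ _)
    have h2 : ∀ x, 0 ≤ D (fun x => max (g x) 0) x :=
      hpos _ (fun x => le_max_right _ _)
    filter_upwards [hgfix] with x hx
    exact max_le (by rw [← hx]; exact h1 x) (h2 x)
  -- f minus a constant is fixed
  have hsubconst : ∀ b : ℝ, Integrable (fun x => f x - b) μ ∧
      D (fun x => f x - b) =ᵐ[μ] (fun x => f x - b) := by
    intro b
    have hi : Integrable (fun x => f x - b) μ := hfint.sub (integrable_const b)
    refine ⟨hi, ?_⟩
    have h1 : (fun x => f x - b) = f + (fun _ => -b) := by funext x; simp; ring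
    rw [h1, hadd, hconst (-b)]
    filter_upwards [hfix] with x hx
    simp only [Pi.add_apply]
    rw [hx]
  -- scalar multiples of fixed functions are fixed
  have hsmul' : ∀ (c : ℝ) (g : X → ℝ), D g =ᵐ[μ] g →
      D (fun x => c * g x) =ᵐ[μ] (fun x => c * g x) := by
    intro c g hg
    have h1 : (fun x => c * g x) = c • g := by funext x; simp
    rw [h1, hsmul]
    filter_upwards [hg] with x hx
    simp only [Pi.smul_apply, smul_eq_mul]
    rw [hx]
  -- min with 1 of a fixed function is fixed
  have hmin1 : ∀ g : X → ℝ, Integrable g μ → D g =ᵐ[μ] g →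
      D (fun x => min (g x) 1) =ᵐ[μ] (fun x => min (g x) 1) := by
    intro g hgint hg
    have hp : D (fun x => max (g x - 1) 0) =ᵐ[μ] (fun x => max (g x - 1) 0) := by
      apply hpospart (fun x => g x - 1) (hgint.sub (integrable_const 1))
      have h1 : (fun x => g x - 1) = g + (fun _ => (-1 : ℝ)) := by funext x; simp; ring
      rw [h1, hadd, hconst (-1)]
      filter_upwards [hg] with x hx
      simp only [Pi.add_apply]
      rw [hx]
    have h2 : (fun x => min (g x) 1) = g + (-1 : ℝ) • (fun x => max (g x - 1) 0) := by
      funext x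
      simp only [Pi.add_apply, Pi.smul_apply, smul_eq_mul]
      rcases le_total (g x) 1 with h | h
      · rw [min_eq_left h, max_eq_right (by linarith)]; ring
      · rw [min_eq_right h, max_eq_left (by linarith)]; ring
    rw [h2, hadd, hsmul]
    filter_upwards [hg, hp] with x hx hpx
    simp only [Pi.add_apply, Pi.smul_apply, smul_eq_mul]
    rw [hx, hpx]
  -- every superlevel set is D-invariant hence has measure 0 or 1
  have hsets : ∀ β : ℝ, μ {x | β < f x} = 0 ∨ μ {x | β < f x} = 1 := by
    intro β
    set A := {x | β < f x} with hA
    have hAm : MeasurableSet A := measurableSet_lt measurable_const hfmeas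
    set χ : X → ℝ := A.indicator (fun _ => (1 : ℝ)) with hχ
    have hχi : Integrable χ μ := (integrable_const (1 : ℝ)).indicator hAm
    -- the truncations
    set g : ℕ → X → ℝ := fun n x => min ((n : ℝ) * max (f x - β) 0) 1 with hg
    have hgfix : ∀ n : ℕ, D (g n) =ᵐ[μ] g n := by
      intro n
      apply hmin1
      · apply Integrable.const_mul
        exact (hsubconst β).1.pos_part
      · exact hsmul' _ _ (hpospart _ (hsubconst β).1 (hsubconst β).2)
    have hgle : ∀ n x, g n x ≤ χ x := by
      intro n x
      by_cases hx : x ∈ A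
      · rw [hχ, Set.indicator_of_mem hx]
        exact min_le_right _ _
      · rw [hχ, Set.indicator_of_notMem hx]
        have hfx : f x ≤ β := by simpa [hA] using hx
        have : max (f x - β) 0 = 0 := max_eq_right (by linarith)
        simp [hg, this]
    have hfixχ : D χ =ᵐ[μ] χ := by
      apply eqfix _ hχi
      have hb1 : ∀ n x, D (g n) x ≤ D χ x := fun n => hmono _ _ (hgle n)
      have hb2 : ∀ x, 0 ≤ D χ x := by
        apply hpos
        intro x
        rw [hχ]
        by_cases hx : x ∈ A
        · rw [Set.indicator_of_mem hx]; norm_num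
        · rw [Set.indicator_of_notMem hx]
      have hae : ∀ᵐ x ∂μ, ∀ n : ℕ, g n x ≤ D χ x := by
        rw [ae_all_iff]
        intro n
        filter_upwards [hgfix n] with x hx
        rw [← hx]
        exact hb1 n x
      filter_upwards [hae] with x hx
      by_cases hxA : x ∈ A
      · have hd : 0 < f x - β := by simpa [hA, sub_pos] using hxA
        obtain ⟨n, hn⟩ := exists_nat_ge (1 / (f x - β))
        have h1 : (1 : ℝ) ≤ (n : ℝ) * (f x - β) := by
          rw [div_le_iff₀ hd] at hn
          linarith
        have hgn : g n x = 1 := by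
          rw [hg]
          simp only
          rw [max_eq_left (le_of_lt hd), min_eq_right h1]
        have hχx : χ x = 1 := by rw [hχ]; exact Set.indicator_of_mem hxA _
        rw [hχx, ← hgn]
        exact hx n
      · rw [hχ, Set.indicator_of_notMem hxA]
        exact hb2 x
    exact hinv A hAm hfixχ
  -- now deduce that f is a.e. constant
  have hle_of_null : ∀ β : ℝ, μ {x | β < f x} = 0 → ∀ᵐ x ∂μ, f x ≤ β := by
    intro β h0
    rw [ae_iff]
    convert h0 using 2
    ext x
    simp only [Set.mem_setOf_eq, not_le]
  have hge_of_one : ∀ β : ℝ, μ {x | β < f x} = 1 → ∀ᵐ x ∂μ, β < f x := by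
    intro β h1
    have hAm : MeasurableSet {x | β < f x} := measurableSet_lt measurable_const hfmeas
    rw [ae_iff]
    have : {x | ¬ β < f x} = {x | β < f x}ᶜ := by ext x; simp
    rw [this, measure_compl hAm (measure_ne_top μ _), h1, measure_univ, tsub_self]
  set S : Set ℝ := {β | μ {x | β < f x} = 0} with hS
  have hSne : S.Nonempty := by
    by_contra hne
    have hall : ∀ β : ℝ, ∀ᵐ x ∂μ, β < f x := by
      intro β
      rcases hsets β with h | h
      · exact absurd ⟨β, h⟩ hne
      · exact hge_of_one β h
    have hβ : ∀ β : ℝ, β ≤ ∫ x, f x ∂μ := by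
      intro β
      have := integral_mono_ae (integrable_const β) hfint
        ((hall β).mono fun x hx => le_of_lt hx)
      simpa using this
    linarith [hβ (∫ x, f x ∂μ + 1)]
  have hSbdd : BddBelow S := by
    refine ⟨∫ x, f x ∂μ, fun β hβ => ?_⟩
    have := integral_mono_ae hfint (integrable_const β) (hle_of_null β hβ)
    simpa using this
  set c := sInf S with hc
  refine ⟨c, ?_⟩
  have hupper : μ {x | c < f x} = 0 := by
    have hsub : {x | c < f x} ⊆ ⋃ n : ℕ, {x | c + 1 / ((n : ℝ) + 1) < f x} := by
      intro x hx
      obtain ⟨n, hn⟩ := exists_nat_one_div_lt (show (0 : ℝ) < f x - c by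
        simpa [sub_pos] using hx)
      exact Set.mem_iUnion.2 ⟨n, by simp only [Set.mem_setOf_eq]; linarith⟩
    apply measure_mono_null hsub
    apply measure_iUnion_null
    intro n
    have hpos' : (0 : ℝ) < 1 / ((n : ℝ) + 1) := by positivity
    obtain ⟨β, hβS, hβlt⟩ := exists_lt_of_csInf_lt hSne
      (show sInf S < c + 1 / ((n : ℝ) + 1) by rw [← hc]; linarith)
    apply measure_mono_null _ hβS
    intro x hx
    simp only [Set.mem_setOf_eq] at hx ⊢
    linarith
  have hlower : μ {x | f x < c} = 0 := by
    have hsub : {x | f x < c} ⊆ ⋃ n : ℕ, {x | c - 1 / ((n : ℝ) + 1) < f x}ᶜ := by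
      intro x hx
      obtain ⟨n, hn⟩ := exists_nat_one_div_lt (show (0 : ℝ) < c - f x by
        simpa [sub_pos] using hx)
      refine Set.mem_iUnion.2 ⟨n, ?_⟩
      simp only [Set.mem_compl_iff, Set.mem_setOf_eq, not_lt]
      linarith
    apply measure_mono_null hsub
    apply measure_iUnion_null
    intro n
    have hpos' : (0 : ℝ) < 1 / ((n : ℝ) + 1) := by positivity
    have hnotS : c - 1 / ((n : ℝ) + 1) ∉ S := by
      intro hmem
      have := csInf_le hSbdd hmem
      rw [← hc] at this
      linarith
    have h1 : μ {x | c - 1 / ((n : ℝ) + 1) < f x} = 1 := by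
      rcases hsets (c - 1 / ((n : ℝ) + 1)) with h | h
      · exact absurd h hnotS
      · exact h
    have hAm : MeasurableSet {x | c - 1 / ((n : ℝ) + 1) < f x} :=
      measurableSet_lt measurable_const hfmeas
    rw [measure_compl hAm (measure_ne_top μ _), h1, measure_univ, tsub_self]
  have : μ ({x | c < f x} ∪ {x | f x < c}) = 0 :=
    measure_union_null hupper hlower
  show ∀ᵐ x ∂μ, f x = c
  rw [ae_iff]
  apply measure_mono_null _ this
  intro x hx
  simp only [Set.mem_setOf_eq] at hx
  rcases lt_or_gt_of_ne hx with h | h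
  · exact Or.inr h
  · exact Or.inl h
end

section
/- Let E be a separable Banach space, (X, ℬ, μ) a probability space, and let L_μ(𝓜(P)) denote the set of measurable maps from X to the space 𝓜(P) of positive Radon measures of mass ≤ 1 on a compact metric space P, viewed inside the unit ball of the dual of L¹_μ(C(P,ℝ)). Then L_μ(𝓜(P)) is compact in the weak-star topology of (L¹_μ(C(P,ℝ)))*. -/
/-!
A positive functional `Λ` of norm at most one on `L¹_μ(C(P))` is represented by a weakly
measurable family of positive functionals `γ x` of norm at most one. For each `f`, the set function
`A ↦ Λ (1_A f)` is a signed measure dominated by `‖f‖ μ`; its Radon–Nikodym density `h f` is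
a.e. additive in `f` and a.e. bounded by `‖f‖`. On a countable dense additive subgroup these
relations hold simultaneously off a single null set, and there `f ↦ h f x` extends by continuity
to a functional `γ x`. So the set of the theorem is the intersection of the weak-star compact unit
ball (Banach–Alaoglu) with the weak-star closed cone of positive functionals.
-/

open MeasureTheory Filter Topology Set
open scoped ENNReal NNReal

theorem AddMonoidHom.exists_extension_of_dense {E F : Type*} [NormedAddCommGroup E]
    [NormedSpace ℝ E] [NormedAddCommGroup F] [NormedSpace ℝ F] [CompleteSpace F] {D : AddSubgroup E}
    (hD : Dense (D : Set E)) (φ : D →+ F) {K : ℝ≥0} (hφ : ∀ d, ‖φ d‖ ≤ K * ‖(d : E)‖) :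
    ∃ ℓ : E →L[ℝ] F, ‖ℓ‖ ≤ K ∧ ∀ d : D, ℓ d = φ d := by
  have hφK : LipschitzWith K φ := LipschitzWith.of_dist_le_mul fun d₁ d₂ => by
    simpa only [dist_eq_norm, ← map_sub, AddSubgroup.coe_norm] using hφ (d₁ - d₂)
  set ψ := hD.extend φ
  have hψK : LipschitzWith K ψ := hD.lipschitzWith_extend hφK
  have hψφ : ∀ d : D, ψ d = φ d := hD.extend_eq hφK.continuous
  have hψ_add : ∀ a b, ψ (a + b) = ψ a + ψ b := by
    have : (fun p : E × E => ψ (p.1 + p.2)) = fun p => ψ p.1 + ψ p.2 := by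
      refine Continuous.ext_on (hD.prod hD) (hψK.continuous.comp continuous_add)
        ((hψK.continuous.comp continuous_fst).add (hψK.continuous.comp continuous_snd)) ?_
      rintro ⟨a, b⟩ ⟨ha, hb⟩
      have := hψφ (⟨a, ha⟩ + ⟨b, hb⟩)
      rw [map_add, ← hψφ, ← hψφ] at this
      exact this
    exact fun a b => congrFun this (a, b)
  let ℓ : E →L[ℝ] F := (AddMonoidHom.mk' ψ hψ_add).toRealLinearMap hψK.continuous
  have hψ0 : ψ 0 = 0 := map_zero ℓ
  refine ⟨ℓ, ℓ.opNorm_le_bound K.2 fun v => ?_, hψφ⟩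
  have := hψK.dist_le_mul v 0
  rwa [dist_zero_right, hψ0, dist_zero_right] at this

theorem exists_countable_dense_addSubgroup {E : Type*} [AddCommGroup E] [TopologicalSpace E]
    [TopologicalSpace.PseudoMetrizableSpace E] [TopologicalSpace.SeparableSpace E] (K : Set E) :
    ∃ D : AddSubgroup E, (D : Set E).Countable ∧ Dense (D : Set E) ∧ K ⊆ closure (K ∩ D) := by
  obtain ⟨s, hsc, hs⟩ := TopologicalSpace.exists_countable_dense E
  obtain ⟨t, htK, htc, hKt⟩ :=
    (TopologicalSpace.IsSeparable.of_separableSpace K).exists_countable_dense_subset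
  let D := (Submodule.span ℤ (s ∪ t)).toAddSubgroup
  have hsub : s ∪ t ⊆ D := Submodule.subset_span
  refine ⟨D, ?_, hs.mono (subset_union_left.trans hsub),
    hKt.trans (closure_mono (subset_inter htK (subset_union_right.trans hsub)))⟩
  have := (hsc.union htc).to_subtype
  have : Countable (Submodule.span ℤ (range ((↑) : ↥(s ∪ t) → E))) := inferInstance
  rwa [Subtype.range_coe] at this

theorem exists_clm_eq_on_addSubgroup {E : Type*} [NormedAddCommGroup E] [NormedSpace ℝ E]
    {D : AddSubgroup E} (hD : Dense (D : Set E)) {K : Set E}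
    (hKD : K ⊆ closure (K ∩ D)) {u : E → ℝ} (hadd : ∀ a b : D, u (a + b) = u a + u b) {C : ℝ≥0}
    (hbd : ∀ d : D, |u d| ≤ C * ‖(d : E)‖) (hK : ∀ d : D, (d : E) ∈ K → 0 ≤ u d) :
    ∃ ℓ : E →L[ℝ] ℝ, ‖ℓ‖ ≤ C ∧ (∀ c ∈ K, 0 ≤ ℓ c) ∧ ∀ d : D, ℓ d = u d := by
  obtain ⟨ℓ, hℓC, hℓD⟩ :=
    (AddMonoidHom.mk' (fun d : D => u d) hadd).exists_extension_of_dense hD hbd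
  refine ⟨ℓ, hℓC, fun c hc => ?_, hℓD⟩
  refine closure_minimal (fun d hd => ?_) (isClosed_le continuous_const ℓ.continuous) (hKD hc)
  exact (hK ⟨d, hd.2⟩ hd.1).trans_eq (hℓD ⟨d, hd.2⟩).symm

theorem Dense.measurable_apply {X E β : Type*} [MeasurableSpace X] [TopologicalSpace E]
    [FrechetUrysohnSpace E] [TopologicalSpace β] [TopologicalSpace.PseudoMetrizableSpace β]
    [MeasurableSpace β] [BorelSpace β] {D : Set E} (hD : Dense D) {u : X → E → β}
    (hu : ∀ x, Continuous (u x)) (hDu : ∀ d ∈ D, Measurable fun x => u x d) (c : E) :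
    Measurable fun x => u x c := by
  obtain ⟨d, hdD, hdc⟩ := mem_closure_iff_seq_limit.1 (hD c)
  exact measurable_of_tendsto_metrizable (fun n => hDu _ (hdD n))
    (tendsto_pi_nhds.2 fun x => ((hu x).tendsto c).comp hdc)

section

variable {X E : Type*} [MeasurableSpace X] {μ : Measure X} [NormedAddCommGroup E] [NormedSpace ℝ E]

theorem Dense.ae_eq_apply {γ : X → E →L[ℝ] ℝ} {h : E → X → ℝ}
    (hadd : ∀ c d, h (c + d) =ᵐ[μ] h c + h d) {C : ℝ} (hbd : ∀ c, ∀ᵐ x ∂μ, |h c x| ≤ C * ‖c‖)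
    {D : Set E} (hD : Dense D) (hγD : ∀ d ∈ D, (fun x => γ x d) =ᵐ[μ] h d) (c : E) :
    (fun x => γ x c) =ᵐ[μ] h c := by
  obtain ⟨d, hdD, hdc⟩ := mem_closure_iff_seq_limit.1 (hD c)
  have hae : ∀ᵐ x ∂μ, ∀ n, γ x (d n) = h (d n) x ∧ h (d n) x = h (d n - c) x + h c x ∧
      |h (d n - c) x| ≤ C * ‖d n - c‖ := by
    refine ae_all_iff.2 fun n => ?_
    filter_upwards [hγD _ (hdD n), hadd (d n - c) c, hbd (d n - c)] with x h1 h2 h3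
    rw [sub_add_cancel] at h2
    exact ⟨h1, h2, h3⟩
  filter_upwards [hae] with x hx
  have hγ : Tendsto (fun n => γ x (d n)) atTop (𝓝 (γ x c)) := ((γ x).continuous.tendsto c).comp hdc
  have hh : Tendsto (fun n => h (d n) x) atTop (𝓝 (h c x)) := by
    refine tendsto_iff_norm_sub_tendsto_zero.2 (squeeze_zero (fun _ => norm_nonneg _)
      (fun n => ?_) (by simpa using (tendsto_iff_norm_sub_tendsto_zero.1 hdc).const_mul C))
    rw [(hx n).2.1, add_sub_cancel_right, Real.norm_eq_abs]
    exact (hx n).2.2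
  exact tendsto_nhds_unique hγ (hh.congr fun n => ((hx n).1).symm)

theorem exists_clm_family_ae_eq [TopologicalSpace.SeparableSpace E]
    {h : E → X → ℝ} (hm : ∀ c, Measurable (h c)) (hadd : ∀ c d, h (c + d) =ᵐ[μ] h c + h d)
    {C : ℝ≥0} (hbd : ∀ c, ∀ᵐ x ∂μ, |h c x| ≤ C * ‖c‖) (K : Set E) (hK : ∀ c ∈ K, 0 ≤ᵐ[μ] h c) :
    ∃ γ : X → E →L[ℝ] ℝ, (∀ c, Measurable fun x => γ x c) ∧ (∀ x, ‖γ x‖ ≤ C) ∧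
      (∀ x, ∀ c ∈ K, 0 ≤ γ x c) ∧ ∀ c, (fun x => γ x c) =ᵐ[μ] h c := by
  obtain ⟨D, hDc, hD, hKD⟩ := exists_countable_dense_addSubgroup K
  have : Countable D := hDc
  have hgood : ∀ᵐ x ∂μ, (∀ a b : D, h (a + b) x = h a x + h b x) ∧
      (∀ d : D, |h d x| ≤ C * ‖(d : E)‖) ∧ ∀ d : D, (d : E) ∈ K → 0 ≤ h d x := by
    refine (ae_all_iff.2 fun a : D => ae_all_iff.2 fun b : D => hadd a b).and
      ((ae_all_iff.2 fun d : D => hbd d).and (ae_all_iff.2 fun d : D => ?_))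
    by_cases hdK : (d : E) ∈ K
    · exact (hK d hdK).mono fun x hx _ => hx
    · exact ae_of_all _ fun x hx => absurd hx hdK
  obtain ⟨G, hGae, hGm, hG⟩ := hgood.exists_measurable_mem
  have hℓ : ∀ x ∈ G, ∃ ℓ : E →L[ℝ] ℝ, ‖ℓ‖ ≤ C ∧ (∀ c ∈ K, 0 ≤ ℓ c) ∧ ∀ d : D, ℓ d = h d x :=
    fun x hx => exists_clm_eq_on_addSubgroup hD hKD (u := fun c => h c x)
      (hG x hx).1 (hG x hx).2.1 (hG x hx).2.2
  choose! ℓ hℓC hℓK hℓD using hℓ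
  have hγD : ∀ d : D, (fun x => G.indicator ℓ x d) = G.indicator (h d) := by
    intro d
    funext x
    by_cases hx : x ∈ G <;> simp [hx, hℓD]
  refine ⟨G.indicator ℓ, hD.measurable_apply (fun x => (G.indicator ℓ x).continuous) ?_, ?_, ?_,
    (hD.ae_eq_apply hadd hbd fun d hd => ?_)⟩
  · intro d hd
    rw [hγD ⟨d, hd⟩]
    exact (hm d).indicator hGm
  · intro x
    by_cases hx : x ∈ G <;> simp [hx, hℓC]
  · intro x c hc
    by_cases hx : x ∈ G
    · simpa [hx] using hℓK x hx c hc
    · simp [hx]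
  · rw [hγD ⟨d, hd⟩]
    filter_upwards [hGae] with x hx using indicator_of_mem hx _

end

namespace MeasureTheory

variable {X E : Type*} [MeasurableSpace X] {μ : Measure X} [NormedAddCommGroup E]

theorem indicatorConstLp_nonneg [PartialOrder E] {p : ℝ≥0∞} {A : Set X} {hA : MeasurableSet A}
    {hμA : μ A ≠ ∞} {c : E} (hc : 0 ≤ c) : 0 ≤ indicatorConstLp p hA hμA c :=
  (Lp.coeFn_nonneg _).1 <| indicatorConstLp_coeFn.mono fun x hx => by
    rw [hx]
    exact indicator_nonneg (fun _ _ => hc) x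

theorem ae_le_of_forall_setIntegral_le_mul_measureReal [IsFiniteMeasure μ] {u : X → ℝ}
    (hu : Integrable u μ) {C : ℝ} (h : ∀ A, MeasurableSet A → ∫ x in A, u x ∂μ ≤ C * μ.real A) :
    ∀ᵐ x ∂μ, u x ≤ C :=
  ae_le_of_forall_setIntegral_le hu (integrable_const C) fun A hA _ => by
    rw [setIntegral_const, smul_eq_mul, mul_comm]
    exact h A hA

theorem ae_abs_le_of_forall_abs_setIntegral_le [IsFiniteMeasure μ] {u : X → ℝ}
    (hu : Integrable u μ) {C : ℝ} (h : ∀ A, MeasurableSet A → |∫ x in A, u x ∂μ| ≤ C * μ.real A) :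
    ∀ᵐ x ∂μ, |u x| ≤ C := by
  have hle := ae_le_of_forall_setIntegral_le_mul_measureReal hu fun A hA =>
    (le_abs_self _).trans (h A hA)
  have hge := ae_le_of_forall_setIntegral_le_mul_measureReal (C := C) hu.neg fun A hA => by
    simpa only [Pi.neg_apply, integral_neg] using (neg_le_abs _).trans (h A hA)
  filter_upwards [hle, hge] with x hx hx'
  exact abs_le.2 ⟨neg_le.1 hx', hx⟩

theorem Lp.ext_indicatorConstLp [NormedSpace ℝ E] {F : Type*} [NormedAddCommGroup F]
    [NormedSpace ℝ F] {p : ℝ≥0∞} [Fact (1 ≤ p)] (hp : p ≠ ∞) {S T : Lp E p μ →L[ℝ] F}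
    (h : ∀ (c : E) {A : Set X} (hA : MeasurableSet A) (hμA : μ A < ∞),
      S (indicatorConstLp p hA hμA.ne c) = T (indicatorConstLp p hA hμA.ne c)) : S = T :=
  ContinuousLinearMap.ext <| Lp.induction hp (fun g => S g = T g)
    (fun c A hA hμA => by simpa only [Lp.simpleFunc.coe_indicatorConst] using h c hA hμA)
    (fun f g _ _ _ hf hg => by simp only [map_add, hf, hg]) (isClosed_eq S.continuous T.continuous)

theorem StronglyMeasurable.measurable_clm_apply [NormedSpace ℝ E] {γ : X → E →L[ℝ] ℝ}
    (hγ : ∀ c, Measurable fun x => γ x c) {u : X → E} (hu : StronglyMeasurable u) :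
    Measurable fun x => γ x (u x) :=
  measurable_of_tendsto_metrizable (fun n => (hu.approx n).measurable_bind (fun c x => γ x c) hγ)
    (tendsto_pi_nhds.2 fun x => ((γ x).continuous.tendsto _).comp (hu.tendsto_approx x))

namespace L1

open Classical in
noncomputable def indicatorVectorMeasure (μ : Measure X) [IsFiniteMeasure μ] [CompleteSpace E]
    (c : E) : VectorMeasure X (Lp E 1 μ) :=
  VectorMeasure.of_additive_of_le_measure (μ := ‖c‖₊ • μ)
    (fun A => if hA : MeasurableSet A then indicatorConstLp 1 hA (measure_ne_top μ A) c else 0)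
    (fun A => by
      split_ifs with hA
      · simp [Lp.enorm_def, eLpNorm_congr_ae indicatorConstLp_coeFn, eLpNorm_indicator_const hA]
        rfl
      · simp)
    (fun A B hA hB hAB => by
      simp only [dif_pos hA, dif_pos hB, dif_pos (hA.union hB)]
      exact indicatorConstLp_disjoint_union hA hB _ _ hAB c)
    (fun A hA => dif_neg hA)

theorem indicatorVectorMeasure_apply [IsFiniteMeasure μ] [CompleteSpace E] (c : E) {A : Set X}
    (hA : MeasurableSet A) :
    indicatorVectorMeasure μ c A = indicatorConstLp 1 hA (measure_ne_top μ A) c :=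
  dif_pos hA

theorem exists_density_indicatorConstLp [NormedSpace ℝ E] [CompleteSpace E] [IsFiniteMeasure μ]
    (Λ : Lp E 1 μ →L[ℝ] ℝ) (c : E) :
    ∃ h : X → ℝ, Measurable h ∧ Integrable h μ ∧ ∀ A (hA : MeasurableSet A),
      ∫ x in A, h x ∂μ = Λ (indicatorConstLp 1 hA (measure_ne_top μ A) c) := by
  let s : SignedMeasure X :=
    (indicatorVectorMeasure μ c).mapRange Λ.toLinearMap.toAddMonoidHom Λ.continuous
  have hs : ∀ A (hA : MeasurableSet A), s A = Λ (indicatorConstLp 1 hA (measure_ne_top μ A) c) :=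
    fun A hA => congrArg Λ (indicatorVectorMeasure_apply c hA)
  have hsμ : s ≪ᵥ μ.toENNRealVectorMeasure :=
    VectorMeasure.AbsolutelyContinuous.mk fun A hA hμA => by
      rw [Measure.toENNRealVectorMeasure_apply_measurable hA] at hμA
      have : indicatorConstLp 1 hA (measure_ne_top μ A) c = 0 := norm_eq_zero.1 <| by
        simp [norm_indicatorConstLp one_ne_zero ENNReal.one_ne_top, measureReal_def, hμA]
      rw [hs A hA, this, map_zero]
  refine ⟨s.rnDeriv μ, s.measurable_rnDeriv μ, s.integrable_rnDeriv μ, fun A hA => ?_⟩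
  rw [← withDensityᵥ_apply (s.integrable_rnDeriv μ) hA, s.withDensityᵥ_rnDeriv_eq μ hsμ, hs A hA]

variable [NormedSpace ℝ E]

theorem integrable_clm_apply {γ : X → E →L[ℝ] ℝ} (hγ : ∀ c, Measurable fun x => γ x c) {C : ℝ}
    (hC : ∀ x, ‖γ x‖ ≤ C) (g : Lp E 1 μ) : Integrable (fun x => γ x (g x)) μ :=
  ((integrable_coeFn g).norm.const_mul C).mono'
    (StronglyMeasurable.measurable_clm_apply hγ (Lp.stronglyMeasurable g)).aestronglyMeasurable
    (ae_of_all _ fun x => (γ x).le_of_opNorm_le (hC x) _)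

noncomputable def pairing (μ : Measure X) {γ : X → E →L[ℝ] ℝ}
    (hγ : ∀ c, Measurable fun x => γ x c) {C : ℝ} (hC : ∀ x, ‖γ x‖ ≤ C) : Lp E 1 μ →L[ℝ] ℝ :=
  LinearMap.mkContinuous
    { toFun g := ∫ x, γ x (g x) ∂μ
      map_add' f g := by
        rw [← MeasureTheory.integral_add (integrable_clm_apply hγ hC f)
          (integrable_clm_apply hγ hC g)]
        exact integral_congr_ae ((Lp.coeFn_add f g).mono fun x hx => by
          simp only [hx, Pi.add_apply, map_add])
      map_smul' r f := by
        rw [RingHom.id_apply, smul_eq_mul, ← integral_const_mul]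
        exact integral_congr_ae ((Lp.coeFn_smul r f).mono fun x hx => by
          simp only [hx, Pi.smul_apply, map_smul, smul_eq_mul]) }
    C fun g => by
      rw [norm_eq_integral_norm, ← integral_const_mul]
      exact norm_integral_le_of_norm_le ((integrable_coeFn g).norm.const_mul C)
        (ae_of_all _ fun x => (γ x).le_of_opNorm_le (hC x) _)

section pairing

variable {γ : X → E →L[ℝ] ℝ} (hγ : ∀ c, Measurable fun x => γ x c) {C : ℝ} (hC : ∀ x, ‖γ x‖ ≤ C)

theorem pairing_apply (g : Lp E 1 μ) : pairing μ hγ hC g = ∫ x, γ x (g x) ∂μ :=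
  rfl

theorem norm_pairing_le (hC₀ : 0 ≤ C) : ‖pairing μ hγ hC‖ ≤ C :=
  LinearMap.mkContinuous_norm_le _ hC₀ _

theorem pairing_indicatorConstLp (c : E) {A : Set X} (hA : MeasurableSet A) (hμA : μ A ≠ ∞) :
    pairing μ hγ hC (indicatorConstLp 1 hA hμA c) = ∫ x in A, γ x c ∂μ := by
  rw [pairing_apply, ← integral_indicator hA]
  refine integral_congr_ae ?_
  filter_upwards [indicatorConstLp_coeFn (p := 1) (hs := hA) (hμs := hμA) (c := c)] with x hx
  by_cases hxA : x ∈ A <;> simp [hx, hxA]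

end pairing

theorem exists_clm_family_eq_integral [CompleteSpace E] [TopologicalSpace.SeparableSpace E]
    [IsFiniteMeasure μ] (Λ : Lp E 1 μ →L[ℝ] ℝ) (K : Set E)
    (hK : ∀ c ∈ K, ∀ A (hA : MeasurableSet A),
      0 ≤ Λ (indicatorConstLp 1 hA (measure_ne_top μ A) c)) :
    ∃ γ : X → E →L[ℝ] ℝ, (∀ c, Measurable fun x => γ x c) ∧ (∀ x, ‖γ x‖ ≤ ‖Λ‖) ∧
      (∀ x, ∀ c ∈ K, 0 ≤ γ x c) ∧ ∀ g, Λ g = ∫ x, γ x (g x) ∂μ := by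
  choose h hm hint hΛ using exists_density_indicatorConstLp Λ
  have hadd : ∀ c d, h (c + d) =ᵐ[μ] h c + h d := fun c d =>
    (hint _).ae_eq_of_forall_setIntegral_eq _ _ ((hint c).add (hint d)) fun A hA _ => by
      rw [integral_add' (hint c).integrableOn (hint d).integrableOn, hΛ _ _ hA, hΛ _ _ hA,
        hΛ _ _ hA, ← map_add, indicatorConstLp_add]
  have hbd : ∀ c, ∀ᵐ x ∂μ, |h c x| ≤ ‖Λ‖₊ * ‖c‖ := fun c =>
    ae_abs_le_of_forall_abs_setIntegral_le (hint c) fun A hA => by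
      rw [hΛ c A hA, ← Real.norm_eq_abs, coe_nnnorm, mul_assoc]
      refine (Λ.le_opNorm _).trans_eq ?_
      rw [norm_indicatorConstLp one_ne_zero ENNReal.one_ne_top]
      simp
  have hpos : ∀ c ∈ K, 0 ≤ᵐ[μ] h c := fun c hc =>
    ae_nonneg_of_forall_setIntegral_nonneg (hint c) fun A hA _ => (hΛ c A hA).symm ▸ hK c hc A hA
  obtain ⟨γ, hγm, hγC, hγK, hγh⟩ := exists_clm_family_ae_eq hm hadd hbd K hpos
  have hΛγ : Λ = pairing μ hγm hγC :=
    Lp.ext_indicatorConstLp ENNReal.one_ne_top fun c A hA _ => by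
      rw [pairing_indicatorConstLp, ← hΛ c A hA]
      exact integral_congr_ae (ae_restrict_of_ae (hγh c).symm)
  exact ⟨γ, hγm, hγC, hγK, fun g => by rw [hΛγ, pairing_apply]⟩

end L1

end MeasureTheory

theorem stmt18 {X : Type*} [MeasurableSpace X] (μ : Measure X) [IsProbabilityMeasure μ]
    (P : Type*) [MetricSpace P] [CompactSpace P] :
    IsCompact {Λ : WeakDual ℝ (Lp C(P, ℝ) 1 μ) |
      ∃ γ : X → C(P, ℝ) →L[ℝ] ℝ,
        (∀ x, ∀ f : C(P, ℝ), 0 ≤ f → 0 ≤ γ x f) ∧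
        (∀ x, ‖γ x‖ ≤ 1) ∧
        (∀ f : C(P, ℝ), Measurable fun x => γ x f) ∧
        ∀ g : Lp C(P, ℝ) 1 μ, Λ g = ∫ x, γ x (g x) ∂μ} := by
  have hclosed : IsClosed {Λ : WeakDual ℝ (Lp C(P, ℝ) 1 μ) | ∀ g, 0 ≤ g → 0 ≤ Λ g} := by
    simp only [ofPred_forall]
    exact isClosed_iInter fun g => isClosed_iInter fun _ =>
      isClosed_le continuous_const (WeakDual.eval_continuous g)
  convert (WeakDual.isCompact_closedBall 0 1).inter_right hclosed using 1
  ext Λ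
  rw [mem_inter_iff, mem_preimage, mem_closedBall_zero_iff]
  constructor
  · rintro ⟨γ, hγK, hγC, hγm, hΛ⟩
    have hΛγ : WeakDual.toStrongDual Λ = L1.pairing μ hγm hγC := ContinuousLinearMap.ext hΛ
    refine ⟨hΛγ ▸ L1.norm_pairing_le hγm hγC zero_le_one, fun g hg => ?_⟩
    rw [hΛ]
    exact integral_nonneg_of_ae (((Lp.coeFn_nonneg g).2 hg).mono fun x hx => hγK x _ hx)
  · rintro ⟨hΛ₁, hΛK⟩
    obtain ⟨γ, hγm, hγC, hγK, hγ⟩ := L1.exists_clm_family_eq_integral (WeakDual.toStrongDual Λ)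
      {f | 0 ≤ f} fun c hc A hA => hΛK _ (indicatorConstLp_nonneg hc)
    exact ⟨γ, hγK, fun x => (hγC x).trans hΛ₁, hγm, hγ⟩
end
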